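/- arXiv:2009.06427 — 8 statements merged into one kernel-verified Lean document; each statement's English description precedes it below -/
import Mathlib

section
/- Let (V, ξ, x⁺, x⁻) be a finite-dimensional representation of the Yangian Y_ħ(sl₂). Then the sets of poles of the three End(V)-valued rational functions coincide: σ(ξ) = σ(x⁺) = σ(x⁻). Moreover, for every z ∈ ℂ the order of the pole of ξ at z equals the order of the pole of x⁺ at z, and equals the order of the pole of x⁻ at z. -/
/-!
Letting `v → ∞` in (𝒴4) gives `[x⁺(u), X⁻] = ħ (ξ(u) - 1)`, so `ξ` is nowhere more singular
than `x⁺`. Conversely, `ξ` is rational with `ξ(∞) = 1`, so `ξ(u) = 1 + H/u + O(u⁻²)`; letting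
`u → ∞` in (𝒴2⁺) and (𝒴4) gives `[H, x⁺(v)] = 2ħ x⁺(v)` and shows that `ħ⁻¹H, ħ⁻¹X⁺, ħ⁻¹X⁻`
is an `sl₂`-triple in `End V`. If `x⁺` had a pole of order `a` at `z` larger than that of `ξ`,
its leading coefficient `A = lim (u - z)^a x⁺(u) ≠ 0` would satisfy `[X⁻, A] = 0` and
`[H, A] = 2ħ A`: a lowest weight vector of positive weight in the finite-dimensional adjoint
representation, which cannot exist. The relations are symmetric under `x⁺ ↔ x⁻`, `ħ ↦ -ħ`, which
gives the statement for `x⁻`.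
-/

open Filter Topology Polynomial

noncomputable section

/-- An `End(V)`-valued rational function on `ℂ`, presented as `N(u)/d(u)` where `N` is a
polynomial with coefficients in the continuous endomorphisms of `V` and `d` is a nonzero
scalar polynomial. -/
structure EndRatData (V : Type) [NormedAddCommGroup V] [NormedSpace ℂ V] where
  num : Polynomial (V →L[ℂ] V)
  den : Polynomial ℂ
  den_ne : den ≠ 0

namespace EndRatData

variable {V : Type} [NormedAddCommGroup V] [NormedSpace ℂ V]

/-- The value `N(u)/d(u)` of the rational function at `u`. -/
def eval (f : EndRatData V) (u : ℂ) : V →L[ℂ] V :=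
  (f.den.eval u)⁻¹ • f.num.eval (u • (1 : V →L[ℂ] V))

/-- The set where the presentation `N(u)/d(u)` is defined. -/
def Dom (f : EndRatData V) (u : ℂ) : Prop := f.den.eval u ≠ 0

/-- A function `g : ℂ → End(V)` is bounded near `z` (on a punctured neighbourhood). -/
def BddNearOn (g : ℂ → (V →L[ℂ] V)) (z : ℂ) : Prop :=
  ∃ ε > (0 : ℝ), ∃ C : ℝ, ∀ u : ℂ, u ≠ z → dist u z < ε → ‖g u‖ ≤ C

/-- `z` is a pole of `f` iff `f` is unbounded on every punctured neighbourhood of `z`. -/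
def IsPole (f : EndRatData V) (z : ℂ) : Prop := ¬ BddNearOn f.eval z

/-- The set of poles of `f`. -/
def poles (f : EndRatData V) : Set ℂ := {z | f.IsPole z}

/-- The order of the pole of `f` at `z`: the least `k ≥ 0` such that `(u - z)^k • f(u)`
is bounded near `z`. -/
def order (f : EndRatData V) (z : ℂ) : ℕ :=
  sInf {k : ℕ | BddNearOn (fun u => (u - z) ^ k • f.eval u) z}

end EndRatData

/-- A finite-dimensional representation of the Yangian `Y_hbar(sl₂)`:  `End(V)`-valued
rational currents `ξ(u)`, `x⁺(u)`, `x⁻(u)` with `ξ(∞) = 1`, `x^±(∞) = 0`,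
`X^± = lim u·x^±(u)`, satisfying the relations (𝒴1)–(𝒴4). -/
structure YangianSL2Rep (hbar : ℂ) (V : Type) [NormedAddCommGroup V] [NormedSpace ℂ V] where
  xi : EndRatData V
  xp : EndRatData V
  xm : EndRatData V
  Xp : V →L[ℂ] V
  Xm : V →L[ℂ] V
  xi_lim : Filter.Tendsto xi.eval (Filter.cocompact ℂ) (nhds 1)
  xp_lim : Filter.Tendsto xp.eval (Filter.cocompact ℂ) (nhds 0)
  xm_lim : Filter.Tendsto xm.eval (Filter.cocompact ℂ) (nhds 0)
  Xp_lim : Filter.Tendsto (fun u => u • xp.eval u) (Filter.cocompact ℂ) (nhds Xp)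
  Xm_lim : Filter.Tendsto (fun u => u • xm.eval u) (Filter.cocompact ℂ) (nhds Xm)
  rel1 : ∀ u v : ℂ, xi.Dom u → xi.Dom v →
    xi.eval u * xi.eval v = xi.eval v * xi.eval u
  rel2p : ∀ u v : ℂ, xi.Dom u → xp.Dom v → xp.Dom (u - hbar) →
    (u - v - hbar) • (xi.eval u * xp.eval v) =
      (u - v + hbar) • (xp.eval v * xi.eval u) - (2 * hbar) • (xp.eval (u - hbar) * xi.eval u)
  rel2m : ∀ u v : ℂ, xi.Dom u → xm.Dom v → xm.Dom (u + hbar) →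
    (u - v + hbar) • (xi.eval u * xm.eval v) =
      (u - v - hbar) • (xm.eval v * xi.eval u) + (2 * hbar) • (xm.eval (u + hbar) * xi.eval u)
  rel3p : ∀ u v : ℂ, xp.Dom u → xp.Dom v →
    (u - v - hbar) • (xp.eval u * xp.eval v) =
      (u - v + hbar) • (xp.eval v * xp.eval u) +
        (Xp * xp.eval v - xp.eval v * Xp) - (xp.eval u * Xp - Xp * xp.eval u)
  rel3m : ∀ u v : ℂ, xm.Dom u → xm.Dom v →
    (u - v + hbar) • (xm.eval u * xm.eval v) =
      (u - v - hbar) • (xm.eval v * xm.eval u) +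
        (Xm * xm.eval v - xm.eval v * Xm) - (xm.eval u * Xm - Xm * xm.eval u)
  rel4 : ∀ u v : ℂ, u ≠ v → xp.Dom u → xm.Dom v → xi.Dom u → xi.Dom v →
    xp.eval u * xm.eval v - xm.eval v * xp.eval u =
      (hbar / (u - v)) • (xi.eval v - xi.eval u)

end

section Meromorphic

variable {𝕜 : Type*} [NontriviallyNormedField 𝕜] {E : Type*} [NormedAddCommGroup E]
  [NormedSpace 𝕜 E] {g : 𝕜 → E} {x : 𝕜}

theorem MeromorphicAt.isBoundedUnder_iff_meromorphicOrderAt_nonneg (hg : MeromorphicAt g x) :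
    IsBoundedUnder (· ≤ ·) (𝓝[≠] x) (‖g ·‖) ↔ 0 ≤ meromorphicOrderAt g x := by
  refine ⟨fun hb => ?_, fun h => ?_⟩
  · by_contra! hneg
    exact not_isBoundedUnder_of_tendsto_atTop
      (tendsto_norm_atTop_iff_cobounded.2 (tendsto_cobounded_of_meromorphicOrderAt_neg hneg)) hb
  · obtain ⟨c, hc⟩ := tendsto_nhds_of_meromorphicOrderAt_nonneg hg h
    exact hc.norm.isBoundedUnder_le

theorem meromorphicOrderAt_sub_pow_smul (hg : MeromorphicAt g x) (k : ℕ) :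
    meromorphicOrderAt (fun u => (u - x) ^ k • g u) x = k + meromorphicOrderAt g x := by
  rw [show (fun u => (u - x) ^ k • g u) = ((· - x) ^ k) • g from rfl,
    meromorphicOrderAt_smul (by fun_prop) hg, meromorphicOrderAt_pow_id_sub_const]

theorem MeromorphicAt.exists_tendsto_inv_sub_smul (hg : MeromorphicAt g x)
    (h0 : Tendsto g (𝓝[≠] x) (𝓝 0)) :
    ∃ c, Tendsto (fun u => (u - x)⁻¹ • g u) (𝓝[≠] x) (𝓝 c) := by
  have hpos := (tendsto_zero_iff_meromorphicOrderAt_pos hg).1 h0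
  refine tendsto_nhds_of_meromorphicOrderAt_nonneg (by fun_prop) ?_
  rw [show (fun u => (u - x)⁻¹ • g u) = ((· - x) ^ (-1 : ℤ)) • g by ext; simp,
    meromorphicOrderAt_smul (by fun_prop) hg, meromorphicOrderAt_zpow_id_sub_const]
  cases h : meromorphicOrderAt g x with
  | top => simp
  | coe n =>
    rw [h] at hpos
    norm_cast at hpos ⊢
    lia

end Meromorphic

theorem Polynomial.eval_smul_one_eq_sum {R A : Type*} [CommSemiring R] [Semiring A] [Algebra R A]
    (p : A[X]) (u : R) :
    p.eval (u • 1) = ∑ i ∈ Finset.range (p.natDegree + 1), u ^ i • p.coeff i := by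
  rw [eval_eq_sum_range]
  refine Finset.sum_congr rfl fun i _ => ?_
  rw [_root_.smul_pow, one_pow, mul_smul_one]

namespace EndRatData

variable {V : Type} [NormedAddCommGroup V] [NormedSpace ℂ V]

theorem eval_eq_sum (f : EndRatData V) (u : ℂ) :
    f.eval u = (∑ i ∈ Finset.range (f.den.natDegree + 1), u ^ i • f.den.coeff i)⁻¹ •
      ∑ i ∈ Finset.range (f.num.natDegree + 1), u ^ i • f.num.coeff i := by
  rw [eval, ← eval_smul_one_eq_sum, ← eval_smul_one_eq_sum, smul_eq_mul, mul_one]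

theorem meromorphicAt_eval_comp (f : EndRatData V) {φ : ℂ → ℂ} {x : ℂ} (hφ : MeromorphicAt φ x) :
    MeromorphicAt (fun w => f.eval (φ w)) x := by
  simp only [eval_eq_sum]
  fun_prop

theorem meromorphicAt_eval (f : EndRatData V) (x : ℂ) : MeromorphicAt f.eval x :=
  f.meromorphicAt_eval_comp (MeromorphicAt.id x)

theorem eventually_dom (f : EndRatData V) : ∀ᶠ u in cofinite, f.Dom u :=
  (Polynomial.finite_setOfPred_isRoot f.den_ne).compl_mem_cofinite

theorem bddNearOn_iff_isBoundedUnder {g : ℂ → V →L[ℂ] V} {z : ℂ} :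
    BddNearOn g z ↔ IsBoundedUnder (· ≤ ·) (𝓝[≠] z) (‖g ·‖) := by
  refine ⟨fun ⟨ε, hε, C, hC⟩ => isBoundedUnder_of_eventually_le (a := C) ?_, fun ⟨C, hC⟩ => ?_⟩
  · filter_upwards [self_mem_nhdsWithin, nhdsWithin_le_nhds (Metric.ball_mem_nhds z hε)]
      with u hu hball using hC u hu hball
  · obtain ⟨ε, hε, hsub⟩ := Metric.mem_nhdsWithin_iff.1 (eventually_map.1 hC)
    exact ⟨ε, hε, C, fun u hne hd => hsub ⟨hd, hne⟩⟩

theorem bddNearOn_sub_pow_smul_iff (f : EndRatData V) (z : ℂ) (k : ℕ) :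
    BddNearOn (fun u => (u - z) ^ k • f.eval u) z ↔
      0 ≤ (k : WithTop ℤ) + meromorphicOrderAt f.eval z := by
  rw [bddNearOn_iff_isBoundedUnder, MeromorphicAt.isBoundedUnder_iff_meromorphicOrderAt_nonneg
    (by have := f.meromorphicAt_eval z; fun_prop),
    meromorphicOrderAt_sub_pow_smul (f.meromorphicAt_eval z)]

theorem order_le_iff (f : EndRatData V) (z : ℂ) (k : ℕ) :
    f.order z ≤ k ↔ 0 ≤ (k : WithTop ℤ) + meromorphicOrderAt f.eval z := by
  refine ⟨fun h => ?_, fun h => Nat.sInf_le ((f.bddNearOn_sub_pow_smul_iff z k).2 h)⟩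
  have hne : ∃ j : ℕ, 0 ≤ (j : WithTop ℤ) + meromorphicOrderAt f.eval z := by
    cases meromorphicOrderAt f.eval z with
    | top => exact ⟨0, by simp⟩
    | coe n =>
      refine ⟨n.natAbs, ?_⟩
      rw [← WithTop.coe_natCast, ← WithTop.coe_add, ← WithTop.coe_zero, WithTop.coe_le_coe]
      lia
  have hmem := Nat.sInf_mem (s := {j | BddNearOn (fun u => (u - z) ^ j • f.eval u) z})
    (by simpa only [Set.nonempty_def, Set.mem_ofPred_eq, bddNearOn_sub_pow_smul_iff] using hne)
  rw [Set.mem_ofPred_eq, bddNearOn_sub_pow_smul_iff] at hmem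
  exact hmem.trans (by gcongr; exact h)

theorem isPole_iff_order_ne_zero (f : EndRatData V) (z : ℂ) : f.IsPole z ↔ f.order z ≠ 0 := by
  rw [IsPole, Ne, ← Nat.le_zero, order_le_iff, ← bddNearOn_sub_pow_smul_iff]
  simp only [pow_zero, one_smul]

theorem poles_eq_of_order_eq {f g : EndRatData V} (h : ∀ z, f.order z = g.order z) :
    f.poles = g.poles := by
  ext z
  simp only [poles, Set.mem_ofPred_eq, isPole_iff_order_ne_zero, h]

theorem order_le_of_tendsto (f : EndRatData V) {z : ℂ} {k : ℕ} {c : V →L[ℂ] V}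
    (h : Tendsto (fun u => (u - z) ^ k • f.eval u) (𝓝[≠] z) (𝓝 c)) : f.order z ≤ k :=
  Nat.sInf_le (bddNearOn_iff_isBoundedUnder.2 h.norm.isBoundedUnder_le)

theorem exists_tendsto_of_order_le (f : EndRatData V) {z : ℂ} {k : ℕ} (h : f.order z ≤ k) :
    ∃ c, Tendsto (fun u => (u - z) ^ k • f.eval u) (𝓝[≠] z) (𝓝 c) := by
  have := f.meromorphicAt_eval z
  refine tendsto_nhds_of_meromorphicOrderAt_nonneg (by fun_prop) ?_
  rw [meromorphicOrderAt_sub_pow_smul this]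
  exact (f.order_le_iff z k).1 h

theorem tendsto_zero_of_order_lt (f : EndRatData V) {z : ℂ} {k : ℕ} (h : f.order z < k) :
    Tendsto (fun u => (u - z) ^ k • f.eval u) (𝓝[≠] z) (𝓝 0) := by
  have hpred := (f.order_le_iff z (k - 1)).1 (by lia)
  apply tendsto_zero_of_meromorphicOrderAt_pos
  rw [meromorphicOrderAt_sub_pow_smul (f.meromorphicAt_eval z)]
  cases hn : meromorphicOrderAt f.eval z with
  | top => simp
  | coe n =>
    rw [hn, ← WithTop.coe_natCast, ← WithTop.coe_add, ← WithTop.coe_zero,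
      WithTop.coe_le_coe] at hpred
    rw [← WithTop.coe_natCast, ← WithTop.coe_add, ← WithTop.coe_zero, WithTop.coe_lt_coe]
    lia

theorem exists_tendsto_ne_zero_of_order_pos (f : EndRatData V) {z : ℂ} (h : 0 < f.order z) :
    ∃ A ≠ 0, Tendsto (fun u => (u - z) ^ f.order z • f.eval u) (𝓝[≠] z) (𝓝 A) := by
  have hle := (f.order_le_iff z _).1 le_rfl
  have hnot := mt (f.order_le_iff z (f.order z - 1)).2 (by lia)
  have := f.meromorphicAt_eval z
  refine tendsto_ne_zero_of_meromorphicOrderAt_eq_zero (by fun_prop) ?_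
  rw [meromorphicOrderAt_sub_pow_smul this]
  cases hn : meromorphicOrderAt f.eval z with
  | top => simp [hn] at hnot
  | coe n =>
    rw [hn, ← WithTop.coe_natCast, ← WithTop.coe_add, ← WithTop.coe_zero,
      WithTop.coe_le_coe] at hle hnot
    rw [← WithTop.coe_natCast, ← WithTop.coe_add, ← WithTop.coe_zero, WithTop.coe_inj]
    lia

theorem exists_tendsto_smul_sub (f : EndRatData V) {L : V →L[ℂ] V}
    (hL : Tendsto f.eval (cocompact ℂ) (𝓝 L)) :
    ∃ H, Tendsto (fun u => u • (f.eval u - L)) (cocompact ℂ) (𝓝 H) := by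
  have hmero : MeromorphicAt (fun w => f.eval w⁻¹ - L) 0 := by
    have := f.meromorphicAt_eval_comp (MeromorphicAt.id (0 : ℂ)).inv
    fun_prop
  have h0 : Tendsto (fun w => f.eval w⁻¹ - L) (𝓝[≠] 0) (𝓝 0) := by
    rw [← sub_self L]
    exact (hL.comp (Metric.cobounded_eq_cocompact (α := ℂ) ▸ tendsto_inv₀_nhdsNE_zero)).sub_const L
  obtain ⟨H, hH⟩ := hmero.exists_tendsto_inv_sub_smul h0
  refine ⟨H, (hH.comp (Metric.cobounded_eq_cocompact (α := ℂ) ▸ tendsto_inv₀_cobounded')).congr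
    fun u => ?_⟩
  simp

end EndRatData

attribute [local instance] LieRing.ofAssociativeRing

theorem IsSl2Triple.eq_zero_of_lie_f_eq_zero {R L M : Type*} [CommRing R] [IsDomain R]
    [CharZero R] [LieRing L] [LieAlgebra R L] [AddCommGroup M] [Module R M] [LieRingModule L M]
    [LieModule R L M] [IsNoetherian R M] [Module.IsTorsionFree R M] {h e f : L}
    (t : IsSl2Triple h e f) {m : M} {μ : R} (hμ : ∀ n : ℕ, μ ≠ -n) (hf : ⁅f, m⁆ = 0)
    (hh : ⁅h, m⁆ = μ • m) : m = 0 := by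
  by_contra hm
  have hprim : t.symm.HasPrimitiveVectorWith m (-μ) := ⟨hm, by rw [neg_lie, hh, neg_smul], hf⟩
  obtain ⟨n, hn⟩ := hprim.exists_nat
  exact hμ n (by rw [← hn, neg_neg])

theorem Filter.Tendsto.lie {α A : Type*} [Ring A] [TopologicalSpace A] [IsTopologicalRing A]
    {l : Filter α} {f g : α → A} {a b : A} (hf : Tendsto f l (𝓝 a)) (hg : Tendsto g l (𝓝 b)) :
    Tendsto (fun x => ⁅f x, g x⁆) l (𝓝 ⁅a, b⁆) := by
  simpa only [Ring.lie_def] using (hf.mul hg).sub (hg.mul hf)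

theorem Filter.Tendsto.sub_const_smul {α R E : Type*} [Ring R] [AddCommGroup E] [Module R E]
    [TopologicalSpace E] [IsTopologicalAddGroup E] [ContinuousConstSMul R E] {l : Filter α}
    {φ : α → R} {g : α → E} {X : E} (h : Tendsto (fun u => φ u • g u) l (𝓝 X))
    (h0 : Tendsto g l (𝓝 0)) (c : R) : Tendsto (fun u => (φ u - c) • g u) l (𝓝 X) := by
  simpa [sub_smul] using h.sub (h0.const_smul c)

namespace YangianSL2Rep

variable {hbar : ℂ} {V : Type} [NormedAddCommGroup V] [NormedSpace ℂ V]

def swap (ρ : YangianSL2Rep hbar V) : YangianSL2Rep (-hbar) V where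
  xi := ρ.xi
  xp := ρ.xm
  xm := ρ.xp
  Xp := ρ.Xm
  Xm := ρ.Xp
  xi_lim := ρ.xi_lim
  xp_lim := ρ.xm_lim
  xm_lim := ρ.xp_lim
  Xp_lim := ρ.Xm_lim
  Xm_lim := ρ.Xp_lim
  rel1 := ρ.rel1
  rel2p u v hu hv hv' := by
    simp only [sub_neg_eq_add] at hv' ⊢
    rw [ρ.rel2m u v hu hv hv', ← sub_eq_add_neg, mul_neg, neg_smul, sub_neg_eq_add]
  rel2m u v hu hv hv' := by
    rw [← sub_eq_add_neg] at hv' ⊢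
    rw [ρ.rel2p u v hu hv hv', ← sub_eq_add_neg, sub_neg_eq_add, mul_neg, neg_smul,
      sub_eq_add_neg]
  rel3p u v hu hv := by
    rw [sub_neg_eq_add, ← sub_eq_add_neg, ρ.rel3m u v hu hv]
  rel3m u v hu hv := by
    rw [← sub_eq_add_neg, sub_neg_eq_add, ρ.rel3p u v hu hv]
  rel4 u v huv hu hv hu' hv' := by
    rw [← neg_sub, ρ.rel4 v u huv.symm hv hu hv' hu', ← smul_neg, neg_sub, neg_div, ← div_neg,
      neg_sub]

variable (ρ : YangianSL2Rep hbar V)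

theorem lie_xp_Xm {u : ℂ} (hu : ρ.xp.Dom u) (hu' : ρ.xi.Dom u) :
    ⁅ρ.xp.eval u, ρ.Xm⁆ = hbar • (ρ.xi.eval u - 1) := by
  have hev : ∀ᶠ v in cofinite,
      hbar • (ρ.xi.eval u - ρ.xi.eval v) = ⁅ρ.xp.eval u, (v - u) • ρ.xm.eval v⁆ := by
    filter_upwards [eventually_cofinite_ne u, ρ.xm.eventually_dom, ρ.xi.eventually_dom]
      with v hvu hv hv'
    have hcoef : (v - u) * (hbar / (u - v)) = -hbar := by
      field_simp [sub_ne_zero.2 hvu.symm]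
      ring
    rw [lie_smul, Ring.lie_def, ρ.rel4 u v hvu.symm hu hv hu' hv', smul_smul, hcoef, neg_smul,
      ← smul_neg, neg_sub]
  refine tendsto_nhds_unique (tendsto_const_nhds.lie (ρ.Xm_lim.sub_const_smul ρ.xm_lim u)) ?_
  exact ((tendsto_const_nhds.sub ρ.xi_lim).const_smul hbar).congr'
    (hev.filter_mono cocompact_le_cofinite)

theorem order_xi_le_order_xp (hhbar : hbar ≠ 0) (z : ℂ) : ρ.xi.order z ≤ ρ.xp.order z := by
  set a := ρ.xp.order z
  obtain ⟨c, hc⟩ := ρ.xp.exists_tendsto_of_order_le le_rfl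
  have hpow : Tendsto (fun u => (u - z) ^ a) (𝓝[≠] z) (𝓝 ((z - z) ^ a)) :=
    (show ContinuousAt (fun u => (u - z) ^ a) z by fun_prop).tendsto.mono_left nhdsWithin_le_nhds
  have hev : ∀ᶠ u in cofinite, (u - z) ^ a • (1 : V →L[ℂ] V) +
      hbar⁻¹ • ⁅(u - z) ^ a • ρ.xp.eval u, ρ.Xm⁆ = (u - z) ^ a • ρ.xi.eval u := by
    filter_upwards [ρ.xp.eventually_dom, ρ.xi.eventually_dom] with u hu hu'
    rw [smul_lie, ρ.lie_xp_Xm hu hu', smul_comm hbar⁻¹, inv_smul_smul₀ hhbar, ← smul_add,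
      add_sub_cancel]
  exact ρ.xi.order_le_of_tendsto (((hpow.smul_const 1).add
    ((hc.lie tendsto_const_nhds).const_smul hbar⁻¹)).congr'
      (hev.filter_mono (nhdsNE_le_cofinite z)))

section

variable {H : V →L[ℂ] V} (hH : Tendsto (fun u => u • (ρ.xi.eval u - 1)) (cocompact ℂ) (𝓝 H))
include hH

theorem lie_H_xp {v : ℂ} (hv : ρ.xp.Dom v) : ⁅H, ρ.xp.eval v⁆ = (2 * hbar) • ρ.xp.eval v := by
  have hξ : Tendsto (fun u => ρ.xi.eval u - 1) (cocompact ℂ) (𝓝 0) := by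
    simpa using ρ.xi_lim.sub_const 1
  have hshift : Tendsto (fun u => ρ.xp.eval (u - hbar)) (cocompact ℂ) (𝓝 0) :=
    ρ.xp_lim.comp (Metric.cobounded_eq_cocompact (α := ℂ) ▸ tendsto_sub_const_cobounded hbar)
  have hlim := (((hH.sub_const_smul hξ (v + hbar)).mul_const (ρ.xp.eval v)).sub
    ((hH.sub_const_smul hξ (v - hbar)).const_mul (ρ.xp.eval v))).add
    ((hshift.mul ρ.xi_lim).const_smul (2 * hbar))
  -- (𝒴2⁺), rearranged so that each term has a limit as `u → ∞`
  have hev : ∀ᶠ u in cofinite, (2 * hbar) • ρ.xp.eval v =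
      ((u - (v + hbar)) • (ρ.xi.eval u - 1)) * ρ.xp.eval v -
        ρ.xp.eval v * ((u - (v - hbar)) • (ρ.xi.eval u - 1)) +
        (2 * hbar) • (ρ.xp.eval (u - hbar) * ρ.xi.eval u) := by
    filter_upwards [ρ.xi.eventually_dom,
      (sub_left_injective (b := hbar)).tendsto_cofinite.eventually ρ.xp.eventually_dom]
      with u hu hu'
    rw [show u - (v + hbar) = u - v - hbar by ring, show u - (v - hbar) = u - v + hbar by ring,
      smul_mul_assoc, mul_smul_comm, sub_mul, mul_sub, one_mul, mul_one, smul_sub, smul_sub,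
      ρ.rel2p u v hu hv hu']
    module
  have := tendsto_nhds_unique hlim
    (tendsto_const_nhds.congr' (hev.filter_mono cocompact_le_cofinite))
  simpa [Ring.lie_def] using this

theorem lie_H_Xp : ⁅H, ρ.Xp⁆ = (2 * hbar) • ρ.Xp := by
  have hev : ∀ᶠ u in cofinite, (2 * hbar) • (u • ρ.xp.eval u) = ⁅H, u • ρ.xp.eval u⁆ := by
    filter_upwards [ρ.xp.eventually_dom] with u hu
    rw [lie_smul, ρ.lie_H_xp hH hu, smul_comm]
  exact tendsto_nhds_unique (tendsto_const_nhds.lie ρ.Xp_lim)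
    ((ρ.Xp_lim.const_smul _).congr' (hev.filter_mono cocompact_le_cofinite))

theorem lie_H_Xm : ⁅H, ρ.Xm⁆ = (2 * -hbar) • ρ.Xm :=
  ρ.swap.lie_H_Xp hH

theorem lie_Xp_Xm : ⁅ρ.Xp, ρ.Xm⁆ = hbar • H := by
  have hev : ∀ᶠ u in cofinite, hbar • (u • (ρ.xi.eval u - 1)) = ⁅u • ρ.xp.eval u, ρ.Xm⁆ := by
    filter_upwards [ρ.xp.eventually_dom, ρ.xi.eventually_dom] with u hu hu'
    rw [smul_lie, ρ.lie_xp_Xm hu hu', smul_comm]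
  exact tendsto_nhds_unique (ρ.Xp_lim.lie tendsto_const_nhds)
    ((hH.const_smul hbar).congr' (hev.filter_mono cocompact_le_cofinite))

theorem isSl2Triple (hhbar : hbar ≠ 0) (hH0 : H ≠ 0) :
    IsSl2Triple (hbar⁻¹ • H) (hbar⁻¹ • ρ.Xp) (hbar⁻¹ • ρ.Xm) where
  h_ne_zero := smul_ne_zero (inv_ne_zero hhbar) hH0
  lie_e_f := by
    rw [smul_lie, lie_smul, ρ.lie_Xp_Xm hH, smul_smul, smul_smul, inv_mul_cancel_right₀ hhbar]
  lie_h_e_nsmul := by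
    rw [smul_lie, lie_smul, ρ.lie_H_Xp hH, smul_smul, smul_smul, ← Nat.cast_smul_eq_nsmul ℂ,
      smul_smul]
    congr 1
    field_simp
    norm_num
  lie_h_f_nsmul := by
    rw [smul_lie, lie_smul, ρ.lie_H_Xm hH, smul_smul, smul_smul, ← Nat.cast_smul_eq_nsmul ℂ,
      smul_smul, ← neg_smul]
    congr 1
    field_simp
    norm_num

theorem order_xp_le_order_xi [FiniteDimensional ℂ V] (hhbar : hbar ≠ 0) (z : ℂ) :
    ρ.xp.order z ≤ ρ.xi.order z := by
  by_contra! hlt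
  set a := ρ.xp.order z
  obtain ⟨A, hA0, hA⟩ := ρ.xp.exists_tendsto_ne_zero_of_order_pos (pos_of_gt hlt)
  have hpow : Tendsto (fun u => (u - z) ^ a) (𝓝[≠] z) (𝓝 0) := by
    have : ContinuousAt (fun u => (u - z) ^ a) z := by fun_prop
    simpa [zero_pow (pos_of_gt hlt).ne'] using this.tendsto.mono_left nhdsWithin_le_nhds
  have hξ := ρ.xi.tendsto_zero_of_order_lt hlt
  have hAXm : ⁅A, ρ.Xm⁆ = 0 := by
    have hev : ∀ᶠ u in cofinite, hbar • ((u - z) ^ a • ρ.xi.eval u - (u - z) ^ a • 1) =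
        ⁅(u - z) ^ a • ρ.xp.eval u, ρ.Xm⁆ := by
      filter_upwards [ρ.xp.eventually_dom, ρ.xi.eventually_dom] with u hu hu'
      rw [smul_lie, ρ.lie_xp_Xm hu hu', ← smul_sub, smul_comm]
    refine tendsto_nhds_unique (hA.lie tendsto_const_nhds) ?_
    simpa using ((hξ.sub (hpow.smul_const 1)).const_smul hbar).congr'
      (hev.filter_mono (nhdsNE_le_cofinite z))
  have hHA : ⁅H, A⁆ = (2 * hbar) • A := by
    have hev : ∀ᶠ u in cofinite,
        (2 * hbar) • ((u - z) ^ a • ρ.xp.eval u) = ⁅H, (u - z) ^ a • ρ.xp.eval u⁆ := by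
      filter_upwards [ρ.xp.eventually_dom] with u hu
      rw [lie_smul, ρ.lie_H_xp hH hu, smul_comm]
    exact tendsto_nhds_unique (tendsto_const_nhds.lie hA)
      ((hA.const_smul _).congr' (hev.filter_mono (nhdsNE_le_cofinite z)))
  rcases eq_or_ne H 0 with rfl | hH0
  · rw [zero_lie, eq_comm, smul_eq_zero] at hHA
    exact hA0 (hHA.resolve_left (mul_ne_zero two_ne_zero hhbar))
  refine hA0 ((ρ.isSl2Triple hH hhbar hH0).eq_zero_of_lie_f_eq_zero (μ := (2 : ℂ))
    (fun n h => ?_) ?_ ?_)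
  · have : ((n + 2 : ℕ) : ℂ) = 0 := by push_cast; linear_combination h
    exact absurd (Nat.cast_eq_zero.1 this) (by lia)
  · rw [smul_lie, ← lie_skew, hAXm, neg_zero, smul_zero]
  · rw [smul_lie, hHA, smul_smul, mul_left_comm, inv_mul_cancel₀ hhbar, mul_one]

end

theorem order_xi_eq_order_xp [FiniteDimensional ℂ V] (hhbar : hbar ≠ 0) (z : ℂ) :
    ρ.xi.order z = ρ.xp.order z := by
  obtain ⟨H, hH⟩ := ρ.xi.exists_tendsto_smul_sub ρ.xi_lim
  exact le_antisymm (ρ.order_xi_le_order_xp hhbar z) (ρ.order_xp_le_order_xi hH hhbar z)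

end YangianSL2Rep

/-- For a finite-dimensional representation of `Y_ħ(sl₂)`, the sets of
poles of `ξ`, `x⁺`, `x⁻` coincide, and at every `z ∈ ℂ` the orders of the poles agree. -/
theorem yangianSL2_poles_eq_and_order_eq
    (hbar : ℂ) (hhbar : hbar ≠ 0) (V : Type)
    [NormedAddCommGroup V] [NormedSpace ℂ V] [FiniteDimensional ℂ V]
    (ρ : YangianSL2Rep hbar V) :
    ρ.xi.poles = ρ.xp.poles ∧ ρ.xi.poles = ρ.xm.poles ∧
      ∀ z : ℂ, ρ.xi.order z = ρ.xp.order z ∧ ρ.xi.order z = ρ.xm.order z := by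
  have hxp := ρ.order_xi_eq_order_xp hhbar
  have hxm : ∀ z, ρ.xi.order z = ρ.xm.order z := ρ.swap.order_xi_eq_order_xp (neg_ne_zero.2 hhbar)
  exact ⟨EndRatData.poles_eq_of_order_eq hxp, EndRatData.poles_eq_of_order_eq hxm,
    fun z => ⟨hxp z, hxm z⟩⟩
end

section
/- Let (V, ξ, x⁺, x⁻) be a finite-dimensional representation of the Yangian Y_ħ(sl₂), and write (ad X)(A) := XA − AX for X, A ∈ End(V). Then, as identities of End(V)-valued rational functions (i.e. for all u outside a finite set), one has (ad X⁺)(ξ(u)) = −2ħ·ξ(u)x⁺(u+ħ) and (ad X⁺)(x⁺(u)) = −ħ·x⁺(u)², and more generally for every integer k ≥ 0: ξ(u)·x⁺(u+ħ)^k = ((−1)^k/((k+1)!·ħ^k))·(ad X⁺)^k(ξ(u)) and x⁻(u+ħ)^k·ξ(u) = (1/((k+1)!·ħ^k))·(ad X⁻)^k(ξ(u)). -/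
open Filter Topology Polynomial

/-!
Letting `v → ∞` in (𝒴2^±), where `x^±(v) → 0` and `v·x^±(v) → X^±`, gives
`(ad X⁺) ξ(u) = −2ħ x⁺(u−ħ) ξ(u)` and `(ad X⁻) ξ(u) = 2ħ x⁻(u+ħ) ξ(u)`; (𝒴2⁺) at `v = u + ħ`
turns `x⁺(u−ħ) ξ(u)` into `ξ(u) x⁺(u+ħ)`, away from finitely many `u` and then everywhere by
continuity. The diagonal `u = v` of (𝒴3^±) gives `(ad X^±) x^±(u) = ∓ħ x^±(u)²`.
As `ad X` is a derivation, `ad X ξ = 2c ξ p` and `ad X p = c p²` give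
`ad X (ξ p^k) = (k+2)c ξ p^(k+1)`, which iterates to `(ad X)^k ξ = (k+1)! c^k ξ p^k`; here
`p = x⁺(u+ħ)`, `c = −ħ`, and symmetrically `p = x⁻(u+ħ)`, `c = ħ` with `p` on the left.
-/

section AdRelations

variable {K A : Type*} [CommRing K] [Ring A] [Algebra K A]

theorem ad_mul (X a b : A) :
    X * (a * b) - a * b * X = (X * a - a * X) * b + a * (X * b - b * X) := by
  noncomm_ring

theorem ad_smul (X a : A) (r : K) : X * (r • a) - r • a * X = r • (X * a - a * X) := by
  rw [mul_smul_comm, smul_mul_assoc, smul_sub]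

theorem ad_pow_of_ad_eq_smul_sq {X p : A} {c : K} (hp : X * p - p * X = c • (p * p)) (k : ℕ) :
    X * p ^ k - p ^ k * X = ((k : K) * c) • p ^ (k + 1) := by
  induction k with
  | zero => simp
  | succ k ih =>
    rw [pow_succ p k, ad_mul, ih, hp, smul_mul_assoc, mul_smul_comm, ← pow_succ, ← mul_assoc,
      ← pow_succ, ← pow_succ, ← add_smul]
    push_cast
    ring_nf

theorem iterate_ad_eq_smul_mul_pow {X ξ p : A} {c : K}
    (hξ : X * ξ - ξ * X = (2 * c) • (ξ * p)) (hp : X * p - p * X = c • (p * p)) (k : ℕ) :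
    (fun a => X * a - a * X)^[k] ξ = (((k + 1).factorial : K) * c ^ k) • (ξ * p ^ k) := by
  induction k with
  | zero => simp
  | succ k ih =>
    rw [Function.iterate_succ_apply', ih, ad_smul, ad_mul, hξ, ad_pow_of_ad_eq_smul_sq hp,
      smul_mul_assoc, mul_smul_comm, mul_assoc, ← pow_succ', ← add_smul, smul_smul]
    push_cast [Nat.factorial_succ]
    ring_nf

theorem iterate_ad_eq_smul_pow_mul {X ξ p : A} {c : K}
    (hξ : X * ξ - ξ * X = (2 * c) • (p * ξ)) (hp : X * p - p * X = c • (p * p)) (k : ℕ) :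
    (fun a => X * a - a * X)^[k] ξ = (((k + 1).factorial : K) * c ^ k) • (p ^ k * ξ) := by
  induction k with
  | zero => simp
  | succ k ih =>
    rw [Function.iterate_succ_apply', ih, ad_smul, ad_mul, hξ, ad_pow_of_ad_eq_smul_sq hp,
      smul_mul_assoc, mul_smul_comm, ← mul_assoc, ← pow_succ, ← add_smul, smul_smul]
    push_cast [Nat.factorial_succ]
    ring_nf

end AdRelations

theorem eq_of_continuousAt_of_eventuallyEq_cofinite {X Y : Type*} [TopologicalSpace X]
    [T1Space X] [TopologicalSpace Y] [T2Space Y] {f g : X → Y} {x : X} [(𝓝[≠] x).NeBot]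
    (hf : ContinuousAt f x) (hg : ContinuousAt g x) (h : f =ᶠ[cofinite] g) : f x = g x :=
  tendsto_nhds_unique_of_eventuallyEq (hf.mono_left nhdsWithin_le_nhds)
    (hg.mono_left nhdsWithin_le_nhds) (h.filter_mono (nhdsNE_le_cofinite x))

theorem Filter.Tendsto.sub_smul_of_tendsto_smul {R M : Type*} [Ring R] [TopologicalSpace M]
    [AddCommGroup M] [Module R M] [IsTopologicalAddGroup M] [ContinuousConstSMul R M]
    {l : Filter R} {f : R → M} {X : M} (hf : Tendsto f l (𝓝 0))
    (hX : Tendsto (fun v => v • f v) l (𝓝 X)) (a : R) :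
    Tendsto (fun v => (a - v) • f v) l (𝓝 (-X)) := by
  simpa [sub_smul] using (hf.const_smul a).sub hX

namespace EndRatData

variable {V : Type} [NormedAddCommGroup V] [NormedSpace ℂ V]

theorem continuousAt_eval (f : EndRatData V) {u : ℂ} (hu : f.Dom u) : ContinuousAt f.eval u :=
  (f.den.continuousAt.inv₀ hu).smul
    (f.num.continuous.comp (continuous_id.smul continuous_const)).continuousAt

theorem eventually_dom_add (f : EndRatData V) (c : ℂ) : ∀ᶠ u in cofinite, f.Dom (u + c) :=
  (add_left_injective c).tendsto_cofinite.eventually f.eventually_dom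

end EndRatData

namespace YangianSL2Rep

variable {hbar : ℂ} {V : Type} [NormedAddCommGroup V] [NormedSpace ℂ V]
  (ρ : YangianSL2Rep hbar V)

theorem ad_Xp_xi_of_dom_sub {u : ℂ} (hξ : ρ.xi.Dom u) (hp : ρ.xp.Dom (u - hbar)) :
    ρ.Xp * ρ.xi.eval u - ρ.xi.eval u * ρ.Xp =
      (-(2 * hbar)) • (ρ.xp.eval (u - hbar) * ρ.xi.eval u) := by
  have hlhs : Tendsto (fun v => (u - v - hbar) • (ρ.xi.eval u * ρ.xp.eval v)) (cocompact ℂ)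
      (𝓝 (ρ.xi.eval u * -ρ.Xp)) :=
    (tendsto_const_nhds.mul (ρ.xp_lim.sub_smul_of_tendsto_smul ρ.Xp_lim (u - hbar))).congr
      fun v => by rw [mul_smul_comm, sub_right_comm]
  have hrhs : Tendsto (fun v => (u - v + hbar) • (ρ.xp.eval v * ρ.xi.eval u) -
      (2 * hbar) • (ρ.xp.eval (u - hbar) * ρ.xi.eval u)) (cocompact ℂ)
      (𝓝 (-ρ.Xp * ρ.xi.eval u - (2 * hbar) • (ρ.xp.eval (u - hbar) * ρ.xi.eval u))) :=
    (((ρ.xp_lim.sub_smul_of_tendsto_smul ρ.Xp_lim (u + hbar)).mul_const _).sub_const _).congr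
      fun v => by rw [smul_mul_assoc, sub_add_eq_add_sub]
  have hrel : ∀ᶠ v in cocompact ℂ, _ :=
    (ρ.xp.eventually_dom.filter_mono cocompact_le_cofinite).mono
    fun v hv => ρ.rel2p u v hξ hv hp
  have h := tendsto_nhds_unique (hlhs.congr' hrel) hrhs
  rw [mul_neg, neg_mul] at h
  linear_combination (norm := module) h

theorem ad_Xm_xi {u : ℂ} (hξ : ρ.xi.Dom u) (hm : ρ.xm.Dom (u + hbar)) :
    ρ.Xm * ρ.xi.eval u - ρ.xi.eval u * ρ.Xm =
      (2 * hbar) • (ρ.xm.eval (u + hbar) * ρ.xi.eval u) := by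
  have hlhs : Tendsto (fun v => (u - v + hbar) • (ρ.xi.eval u * ρ.xm.eval v)) (cocompact ℂ)
      (𝓝 (ρ.xi.eval u * -ρ.Xm)) :=
    (tendsto_const_nhds.mul (ρ.xm_lim.sub_smul_of_tendsto_smul ρ.Xm_lim (u + hbar))).congr
      fun v => by rw [mul_smul_comm, sub_add_eq_add_sub]
  have hrhs : Tendsto (fun v => (u - v - hbar) • (ρ.xm.eval v * ρ.xi.eval u) +
      (2 * hbar) • (ρ.xm.eval (u + hbar) * ρ.xi.eval u)) (cocompact ℂ)
      (𝓝 (-ρ.Xm * ρ.xi.eval u + (2 * hbar) • (ρ.xm.eval (u + hbar) * ρ.xi.eval u))) :=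
    (((ρ.xm_lim.sub_smul_of_tendsto_smul ρ.Xm_lim (u - hbar)).mul_const _).add_const _).congr
      fun v => by rw [smul_mul_assoc, sub_right_comm]
  have hrel : ∀ᶠ v in cocompact ℂ, _ :=
    (ρ.xm.eventually_dom.filter_mono cocompact_le_cofinite).mono
    fun v hv => ρ.rel2m u v hξ hv hm
  have h := tendsto_nhds_unique (hlhs.congr' hrel) hrhs
  rw [mul_neg, neg_mul] at h
  linear_combination (norm := module) h

theorem xi_mul_xp_add_eq (hhbar : hbar ≠ 0) {u : ℂ} (hξ : ρ.xi.Dom u)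
    (hp : ρ.xp.Dom (u + hbar)) (hp' : ρ.xp.Dom (u - hbar)) :
    ρ.xi.eval u * ρ.xp.eval (u + hbar) = ρ.xp.eval (u - hbar) * ρ.xi.eval u := by
  have h := ρ.rel2p u (u + hbar) hξ hp hp'
  rw [show u - (u + hbar) + hbar = 0 by ring, zero_smul, zero_sub, ← neg_smul,
    show u - (u + hbar) - hbar = -(2 * hbar) by ring] at h
  exact smul_right_injective _ (neg_ne_zero.mpr (mul_ne_zero two_ne_zero hhbar)) h

theorem ad_Xp_xi (hhbar : hbar ≠ 0) {u : ℂ} (hξ : ρ.xi.Dom u) (hp : ρ.xp.Dom (u + hbar)) :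
    ρ.Xp * ρ.xi.eval u - ρ.xi.eval u * ρ.Xp =
      (-(2 * hbar)) • (ρ.xi.eval u * ρ.xp.eval (u + hbar)) := by
  have hcont_xi := ρ.xi.continuousAt_eval hξ
  have hcont_xp : ContinuousAt (fun z => ρ.xp.eval (z + hbar)) u :=
    (ρ.xp.continuousAt_eval hp).comp_of_eq (continuous_add_const hbar).continuousAt rfl
  refine eq_of_continuousAt_of_eventuallyEq_cofinite
    (f := fun z => ρ.Xp * ρ.xi.eval z - ρ.xi.eval z * ρ.Xp)
    (g := fun z => (-(2 * hbar)) • (ρ.xi.eval z * ρ.xp.eval (z + hbar)))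
    (by fun_prop) (by fun_prop) ?_
  filter_upwards [ρ.xi.eventually_dom, ρ.xp.eventually_dom_add hbar,
    ρ.xp.eventually_dom_add (-hbar)] with z hξz hpz hpz'
  rw [← sub_eq_add_neg] at hpz'
  rw [ρ.ad_Xp_xi_of_dom_sub hξz hpz', ρ.xi_mul_xp_add_eq hhbar hξz hpz hpz']

theorem ad_Xp_xp {u : ℂ} (hp : ρ.xp.Dom u) :
    ρ.Xp * ρ.xp.eval u - ρ.xp.eval u * ρ.Xp = (-hbar) • (ρ.xp.eval u * ρ.xp.eval u) := by
  have h := ρ.rel3p u u hp hp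
  rw [sub_self, zero_sub, zero_add] at h
  linear_combination (norm := module) (-(2 : ℂ)⁻¹) • h

theorem ad_Xm_xm {u : ℂ} (hm : ρ.xm.Dom u) :
    ρ.Xm * ρ.xm.eval u - ρ.xm.eval u * ρ.Xm = hbar • (ρ.xm.eval u * ρ.xm.eval u) := by
  have h := ρ.rel3m u u hm hm
  rw [sub_self, zero_sub, zero_add] at h
  linear_combination (norm := module) (-(2 : ℂ)⁻¹) • h

end YangianSL2Rep

theorem yangianSL2_ad_relations_general
    (hbar : ℂ) (hhbar : hbar ≠ 0) (V : Type)
    [NormedAddCommGroup V] [NormedSpace ℂ V]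
    (ρ : YangianSL2Rep hbar V) :
    (∀ u : ℂ, ρ.xi.Dom u → ρ.xp.Dom (u + hbar) →
      ρ.Xp * ρ.xi.eval u - ρ.xi.eval u * ρ.Xp =
        (-(2 * hbar)) • (ρ.xi.eval u * ρ.xp.eval (u + hbar))) ∧
    (∀ u : ℂ, ρ.xp.Dom u →
      ρ.Xp * ρ.xp.eval u - ρ.xp.eval u * ρ.Xp =
        (-hbar) • (ρ.xp.eval u * ρ.xp.eval u)) ∧
    (∀ (k : ℕ) (u : ℂ), ρ.xi.Dom u → ρ.xp.Dom (u + hbar) →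
      ρ.xi.eval u * (ρ.xp.eval (u + hbar)) ^ k =
        ((-1) ^ k / ((Nat.factorial (k + 1) : ℂ) * hbar ^ k)) •
          ((fun A : V →L[ℂ] V => ρ.Xp * A - A * ρ.Xp)^[k] (ρ.xi.eval u))) ∧
    (∀ (k : ℕ) (u : ℂ), ρ.xi.Dom u → ρ.xm.Dom (u + hbar) →
      (ρ.xm.eval (u + hbar)) ^ k * ρ.xi.eval u =
        (1 / ((Nat.factorial (k + 1) : ℂ) * hbar ^ k)) •
          ((fun A : V →L[ℂ] V => ρ.Xm * A - A * ρ.Xm)^[k] (ρ.xi.eval u))) := by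
  have hfac (k : ℕ) : ((k + 1).factorial : ℂ) ≠ 0 :=
    Nat.cast_ne_zero.mpr (Nat.factorial_ne_zero _)
  refine ⟨fun u hξ hp => ρ.ad_Xp_xi hhbar hξ hp, fun u hp => ρ.ad_Xp_xp hp,
    fun k u hξ hp => ?_, fun k u hξ hm => ?_⟩
  · have hξ' := ρ.ad_Xp_xi hhbar hξ hp
    rw [neg_mul_eq_mul_neg] at hξ'
    rw [iterate_ad_eq_smul_mul_pow hξ' (ρ.ad_Xp_xp hp), smul_smul, eq_comm]
    convert one_smul ℂ _ using 2
    rw [neg_pow hbar]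
    field_simp [hfac]
    rw [← pow_mul, pow_mul', neg_one_sq, one_pow]
  · rw [iterate_ad_eq_smul_pow_mul (ρ.ad_Xm_xi hξ hm) (ρ.ad_Xm_xm hm), smul_smul, eq_comm]
    convert one_smul ℂ _ using 2
    field_simp [hfac]

/-- Commutation relations between `X^± = lim u·x^±(u)` and the currents:
`(ad X⁺)ξ(u) = −2ħ ξ(u)x⁺(u+ħ)`, `(ad X⁺)x⁺(u) = −ħ x⁺(u)²`, and for all `k ≥ 0`,
`ξ(u)x⁺(u+ħ)^k = ((−1)^k/((k+1)!ħ^k))·(ad X⁺)^k ξ(u)` and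
`x⁻(u+ħ)^k ξ(u) = (1/((k+1)!ħ^k))·(ad X⁻)^k ξ(u)`. -/
theorem yangianSL2_ad_relations
    (hbar : ℂ) (hhbar : hbar ≠ 0) (V : Type)
    [NormedAddCommGroup V] [NormedSpace ℂ V] [FiniteDimensional ℂ V]
    (ρ : YangianSL2Rep hbar V) :
    (∀ u : ℂ, ρ.xi.Dom u → ρ.xp.Dom (u + hbar) →
      ρ.Xp * ρ.xi.eval u - ρ.xi.eval u * ρ.Xp =
        (-(2 * hbar)) • (ρ.xi.eval u * ρ.xp.eval (u + hbar))) ∧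
    (∀ u : ℂ, ρ.xp.Dom u →
      ρ.Xp * ρ.xp.eval u - ρ.xp.eval u * ρ.Xp =
        (-hbar) • (ρ.xp.eval u * ρ.xp.eval u)) ∧
    (∀ (k : ℕ) (u : ℂ), ρ.xi.Dom u → ρ.xp.Dom (u + hbar) →
      ρ.xi.eval u * (ρ.xp.eval (u + hbar)) ^ k =
        ((-1) ^ k / ((Nat.factorial (k + 1) : ℂ) * hbar ^ k)) •
          ((fun A : V →L[ℂ] V => ρ.Xp * A - A * ρ.Xp)^[k] (ρ.xi.eval u))) ∧
    (∀ (k : ℕ) (u : ℂ), ρ.xi.Dom u → ρ.xm.Dom (u + hbar) →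
      (ρ.xm.eval (u + hbar)) ^ k * ρ.xi.eval u =
        (1 / ((Nat.factorial (k + 1) : ℂ) * hbar ^ k)) •
          ((fun A : V →L[ℂ] V => ρ.Xm * A - A * ρ.Xm)^[k] (ρ.xi.eval u))) :=
  yangianSL2_ad_relations_general hbar hhbar V ρ
end

section
/- Let W be a finite-dimensional complex vector space, let N ≥ 0 be an integer, and let w_0, …, w_N ∈ W with w_N ≠ 0. Suppose there exist an endomorphism X ∈ End(W) and nonzero complex numbers x_0, …, x_N such that X(w_n) = Σ_{p=0}^{N−n} x_p·w_{n+p} for every 0 ≤ n ≤ N. Then the vectors w_0, …, w_N are linearly independent. -/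
/-!
Put `Y = X - x₀ • 1` and `S m = span {w_m, …, w_N}`. Then `Y` maps `S m` into `S (m + 1)`
and `Y w_n ≡ x₁ • w_{n+1} (mod S (n + 2))`. So if `w_n ∈ S (n + 1)`, applying `Y` gives
`x₁ • w_{n+1} ∈ S (n + 2)`, and as `x₁ ≠ 0`, `w_{n+1} ∈ S (n + 2)`. Downward induction from
`w_N ≠ 0` therefore shows that each `w_n, …, w_N` is linearly independent.
-/

open Finset Submodule

section ShiftRelation

variable {K W : Type*} [Field K] [AddCommGroup W] [Module K W] {N : ℕ} {w : ℕ → W}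

theorem linearIndepOn_Icc_iff {n : ℕ} (hn : n ≤ N) :
    LinearIndepOn K w (Set.Icc n N) ↔
      LinearIndepOn K w (Set.Icc (n + 1) N) ∧ w n ∉ span K (w '' Set.Icc (n + 1) N) := by
  rw [← Set.insert_Icc_add_one_left_eq_Icc hn, linearIndepOn_insert (by simp)]

theorem sum_Ico_smul_mem_span_Icc (c : ℕ → K) {n : ℕ} (hn : n ≤ N) (a : ℕ) :
    ∑ p ∈ Ico a (N - n + 1), c p • w (n + p) ∈ span K (w '' Set.Icc (n + a) N) := by
  refine sum_mem fun p hp => smul_mem _ _ (subset_span ⟨n + p, ?_, rfl⟩)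
  rw [mem_Ico] at hp
  constructor <;> omega

theorem map_span_Icc_le {Y : Module.End K W} {n : ℕ}
    (hY : ∀ m, n ≤ m → m ≤ N → Y (w m) ∈ span K (w '' Set.Icc (m + 1) N)) :
    (span K (w '' Set.Icc n N)).map Y ≤ span K (w '' Set.Icc (n + 1) N) := by
  rw [map_span_le]
  rintro _ ⟨m, ⟨hnm, hmN⟩, rfl⟩
  exact span_mono (Set.image_mono (Set.Icc_subset_Icc (by omega) le_rfl)) (hY m hnm hmN)

variable {X : Module.End K W} {x : ℕ → K}

theorem sub_smul_one_apply_eq_sum_Ico {n : ℕ}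
    (hX : X (w n) = ∑ p ∈ range (N - n + 1), x p • w (n + p)) :
    (X - x 0 • 1) (w n) = ∑ p ∈ Ico 1 (N - n + 1), x p • w (n + p) := by
  rw [LinearMap.sub_apply, hX, range_eq_Ico, sum_eq_sum_Ico_succ_bot (by omega)]
  simp

theorem notMem_span_Icc_of_shift_relation {n : ℕ} (hn : n < N) (hx₁ : x 1 ≠ 0)
    (hX : ∀ m, n ≤ m → m ≤ N → X (w m) = ∑ p ∈ range (N - m + 1), x p • w (m + p))
    (hsucc : w (n + 1) ∉ span K (w '' Set.Icc (n + 2) N)) :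
    w n ∉ span K (w '' Set.Icc (n + 1) N) := by
  set Y := X - x 0 • 1
  have hY (m : ℕ) (hnm : n ≤ m) (hmN : m ≤ N) :
      Y (w m) = ∑ p ∈ Ico 1 (N - m + 1), x p • w (m + p) :=
    sub_smul_one_apply_eq_sum_Ico (hX m hnm hmN)
  have hY_mem : ∀ m, n + 1 ≤ m → m ≤ N → Y (w m) ∈ span K (w '' Set.Icc (m + 1) N) := by
    intro m hnm hmN
    rw [hY m (by omega) hmN]
    exact sum_Ico_smul_mem_span_Icc x hmN 1
  have hYn : Y (w n) = x 1 • w (n + 1) + ∑ p ∈ Ico 2 (N - n + 1), x p • w (n + p) := by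
    rw [hY n le_rfl hn.le, sum_eq_sum_Ico_succ_bot (by omega)]
  intro hmem
  have hYn_mem : Y (w n) ∈ span K (w '' Set.Icc (n + 2) N) :=
    map_span_Icc_le hY_mem (mem_map_of_mem hmem)
  rw [hYn, add_mem_cancel_right (sum_Ico_smul_mem_span_Icc x hn.le 2), smul_mem_iff _ hx₁]
    at hYn_mem
  exact hsucc hYn_mem

theorem linearIndepOn_Icc_of_shift_relation (hwN : w N ≠ 0) (hx : ∀ p ≤ N, x p ≠ 0)
    (hX : ∀ n, n ≤ N → X (w n) = ∑ p ∈ range (N - n + 1), x p • w (n + p))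
    {n : ℕ} (hn : n ≤ N) :
    LinearIndepOn K w (Set.Icc n N) := by
  induction hn using Nat.decreasingInduction with
  | self => simpa using hwN
  | of_succ n hn ih =>
    rw [linearIndepOn_Icc_iff hn.le]
    exact ⟨ih, notMem_span_Icc_of_shift_relation hn (hx 1 (by omega)) (fun m _ hm => hX m hm)
      ((linearIndepOn_Icc_iff hn).mp ih).2⟩

end ShiftRelation

theorem linearIndependent_of_shift_relation_general
    (W : Type) [AddCommGroup W] [Module ℂ W]
    (N : ℕ) (w : ℕ → W) (hwN : w N ≠ 0)
    (X : Module.End ℂ W) (x : ℕ → ℂ) (hx : ∀ p : ℕ, p ≤ N → x p ≠ 0)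
    (hX : ∀ n : ℕ, n ≤ N → X (w n) = ∑ p ∈ Finset.range (N - n + 1), x p • w (n + p)) :
    LinearIndependent ℂ (fun i : Fin (N + 1) => w i) :=
  (linearIndepOn_Icc_of_shift_relation hwN hx hX N.zero_le).comp
    (fun i : Fin (N + 1) => ⟨i, Nat.zero_le _, Nat.lt_succ_iff.mp i.2⟩)
    fun _ _ hij => Fin.ext (congrArg Subtype.val hij)

/-- If `w_0, …, w_N` in a finite-dimensional complex vector space `W`
satisfy `X w_n = Σ_{p=0}^{N−n} x_p • w_{n+p}` for an endomorphism `X` and nonzero scalars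
`x_0, …, x_N`, and `w_N ≠ 0`, then `w_0, …, w_N` are linearly independent. -/
theorem linearIndependent_of_shift_relation
    (W : Type) [AddCommGroup W] [Module ℂ W] [FiniteDimensional ℂ W]
    (N : ℕ) (w : ℕ → W) (hwN : w N ≠ 0)
    (X : Module.End ℂ W) (x : ℕ → ℂ) (hx : ∀ p : ℕ, p ≤ N → x p ≠ 0)
    (hX : ∀ n : ℕ, n ≤ N → X (w n) = ∑ p ∈ Finset.range (N - n + 1), x p • w (n + p)) :
    LinearIndependent ℂ (fun i : Fin (N + 1) => w i) :=
  linearIndependent_of_shift_relation_general W N w hwN X x hx hX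
end

section
/- Let κ > 0 be a real number, let ħ be a nonzero complex number, and let a : ℤ → ℤ be a finitely supported function. Suppose that Σ_{r ∈ ℤ} a(r)·Ψ_κ(u + rħ/2) = 0 for every u ∈ ℂ such that (u + rħ/2)/(2κħ) is not a nonpositive integer for every r in the support of a. Then a = 0. -/
/-!
Let `r₀` be the least index in the support of `a` and put `u = 2κħ t - r₀ħ/2` with `t > 0` real.
Then each argument `(u + rħ/2)/(2κħ) = t + (r - r₀)/(4κ)` is a positive real, so the hypothesis
applies, and as `t → 0⁺` only the `r₀` term approaches a pole of the digamma function, the one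
at `0` with residue `-1`. Multiplying the vanishing sum by `t` and letting `t → 0⁺` therefore
gives `a r₀ = 0`, a contradiction.
-/

open Filter Topology

namespace Complex

theorem ofReal_ne_neg_natCast_of_pos {x : ℝ} (hx : 0 < x) (m : ℕ) : (x : ℂ) ≠ -m := by
  intro hm
  have := congrArg re hm
  simp only [ofReal_re, neg_re, natCast_re] at this
  linarith [m.cast_nonneg (α := ℝ)]

theorem analyticAt_Gamma {s : ℂ} (hs : ∀ m : ℕ, s ≠ -m) : AnalyticAt ℂ Gamma s := by
  simpa using (differentiable_one_div_Gamma.analyticAt s).fun_inv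
    (by simpa using Gamma_ne_zero hs)

theorem continuousAt_digamma {s : ℂ} (hs : ∀ m : ℕ, s ≠ -m) : ContinuousAt digamma s :=
  (analyticAt_Gamma hs).deriv.continuousAt.div (analyticAt_Gamma hs).continuousAt
    (Gamma_ne_zero hs)

theorem eventually_ne_neg_natCast_nhdsNE_zero :
    ∀ᶠ z in 𝓝[≠] (0 : ℂ), ∀ m : ℕ, z ≠ -(m : ℂ) := by
  filter_upwards [nhdsWithin_le_nhds (Metric.ball_mem_nhds (0 : ℂ) one_pos),
    self_mem_nhdsWithin] with z hz hz0 m hm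
  rcases m with _ | m
  · exact hz0 (by simpa using hm)
  · rw [mem_ball_zero_iff, hm, norm_neg, norm_natCast] at hz
    exact absurd hz (by simp)

theorem tendsto_self_mul_digamma_nhdsNE_zero :
    Tendsto (fun z => z * digamma z) (𝓝[≠] 0) (𝓝 (-1)) := by
  have h1 : ContinuousAt digamma (0 + 1) := by
    simpa using continuousAt_digamma (ofReal_ne_neg_natCast_of_pos one_pos)
  have hlim : Tendsto (fun z => z * digamma (z + 1) - 1) (𝓝 0) (𝓝 (0 * digamma (0 + 1) - 1)) :=
    (continuous_id.tendsto 0).mul (h1.tendsto.comp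
      ((continuous_add_const 1).tendsto 0)) |>.sub_const 1
  rw [zero_mul, zero_sub] at hlim
  refine (hlim.mono_left nhdsWithin_le_nhds).congr' ?_
  filter_upwards [eventually_ne_neg_natCast_nhdsNE_zero] with z hz
  have hz0 : z ≠ 0 := by simpa using hz 0
  rw [digamma_apply_add_one z hz]
  field_simp
  ring

theorem tendsto_ofReal_nhdsGT_zero : Tendsto ((↑) : ℝ → ℂ) (𝓝[>] 0) (𝓝[≠] 0) :=
  tendsto_nhdsWithin_iff.mpr
    ⟨continuous_ofReal.tendsto' 0 0 ofReal_zero |>.mono_left nhdsWithin_le_nhds,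
      eventually_nhdsWithin_of_forall fun _ ht => ofReal_ne_zero.mpr (ne_of_gt ht)⟩

theorem eq_zero_of_sum_mul_digamma_add_eq_zero {ι : Type*} [DecidableEq ι] (s : Finset ι)
    (b : ι → ℂ) (d : ι → ℝ) {i₀ : ι} (hi₀ : i₀ ∈ s) (hd₀ : d i₀ = 0)
    (hd : ∀ i ∈ s, i ≠ i₀ → 0 < d i)
    (h : ∀ t : ℝ, 0 < t → ∑ i ∈ s, b i * digamma (t + d i) = 0) :
    b i₀ = 0 := by
  have hpole : Tendsto (fun t : ℝ => (t : ℂ) * (b i₀ * digamma (t + d i₀))) (𝓝[>] 0)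
      (𝓝 (b i₀ * -1)) := by
    simp only [hd₀, ofReal_zero, add_zero, mul_left_comm (_ : ℂ) (b i₀)]
    exact (tendsto_self_mul_digamma_nhdsNE_zero.comp tendsto_ofReal_nhdsGT_zero).const_mul _
  have hregular : Tendsto (fun t : ℝ => ∑ i ∈ s.erase i₀, (t : ℂ) * (b i * digamma (t + d i)))
      (𝓝[>] 0) (𝓝 0) := by
    have hterm : ∀ i ∈ s.erase i₀,
        Tendsto (fun t : ℝ => (t : ℂ) * (b i * digamma (t + d i))) (𝓝[>] 0) (𝓝 0) := by
      intro i hi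
      have hdi := ofReal_ne_neg_natCast_of_pos
        (hd i (Finset.mem_of_mem_erase hi) (Finset.ne_of_mem_erase hi))
      have hcont : ContinuousAt (fun t : ℝ => digamma (t + d i)) 0 := by
        refine ContinuousAt.comp (g := digamma) ?_ (by fun_prop)
        simpa using continuousAt_digamma hdi
      simpa using ((continuous_ofReal.tendsto' 0 0 ofReal_zero).mul
        (hcont.tendsto.const_mul (b i))).mono_left nhdsWithin_le_nhds
    simpa using tendsto_finsetSum _ hterm
  have hlim : Tendsto (fun t : ℝ => (t : ℂ) * ∑ i ∈ s, b i * digamma (t + d i)) (𝓝[>] 0)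
      (𝓝 (b i₀ * -1 + 0)) := (hpole.add hregular).congr fun t => by
    rw [← Finset.mul_sum, ← mul_add,
      Finset.add_sum_erase s (fun i => b i * digamma (t + d i)) hi₀]
  have hzero : Tendsto (fun t : ℝ => (t : ℂ) * ∑ i ∈ s, b i * digamma (t + d i)) (𝓝[>] 0)
      (𝓝 0) :=
    tendsto_const_nhds.congr' <| eventually_nhdsWithin_of_forall fun t ht => by simp [h t ht]
  simpa using tendsto_nhds_unique hlim hzero

end Complex

open Complex in
/-- If a finitely supported integer combination of translates
`Ψ_κ(u + rħ/2)` of the digamma-type function `Ψ_κ(z) = Γ′(z/(2κħ))/Γ(z/(2κħ))` vanishes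
for every admissible `u`, then all coefficients vanish. -/
theorem digamma_translates_linearIndependent
    (κ : ℝ) (hκ : 0 < κ) (hbar : ℂ) (hhbar : hbar ≠ 0) (a : ℤ →₀ ℤ)
    (h : ∀ u : ℂ,
      (∀ r ∈ a.support, ∀ m : ℤ, m ≤ 0 →
        (u + (r : ℂ) * hbar / 2) / (2 * (κ : ℂ) * hbar) ≠ (m : ℂ)) →
      ∑ r ∈ a.support,
        (a r : ℂ) *
          (deriv Complex.Gamma ((u + (r : ℂ) * hbar / 2) / (2 * (κ : ℂ) * hbar)) /
            Complex.Gamma ((u + (r : ℂ) * hbar / 2) / (2 * (κ : ℂ) * hbar))) = 0) :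
    a = 0 := by
  by_contra ha
  have hne := Finsupp.support_nonempty_iff.mpr ha
  set r₀ := a.support.min' hne
  let d : ℤ → ℝ := fun r => (r - r₀) / (4 * κ)
  have hd : ∀ r ∈ a.support, 0 ≤ d r := fun r hr =>
    div_nonneg (sub_nonneg.mpr (by exact_mod_cast a.support.min'_le r hr)) (by positivity)
  have harg : ∀ (t : ℝ) (r : ℤ), (2 * κ * hbar * t - r₀ * hbar / 2 + r * hbar / 2) /
      (2 * (κ : ℂ) * hbar) = ((t + d r : ℝ) : ℂ) := fun t r => by
    have hκ0 : (κ : ℂ) ≠ 0 := ofReal_ne_zero.mpr hκ.ne'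
    push_cast [d]
    field_simp
    ring
  have hr₀ : r₀ ∈ a.support := a.support.min'_mem hne
  suffices (a r₀ : ℂ) = 0 from Finsupp.mem_support_iff.mp hr₀ (by exact_mod_cast this)
  refine eq_zero_of_sum_mul_digamma_add_eq_zero a.support (fun r => (a r : ℂ)) d hr₀
    (by simp [d]) (fun r hr hrr₀ => ?_) fun t ht => ?_
  · have hlt : r₀ < r := lt_of_le_of_ne (a.support.min'_le r hr) (Ne.symm hrr₀)
    exact div_pos (sub_pos.mpr (by exact_mod_cast hlt)) (by positivity)
  · have hadm := h (2 * κ * hbar * t - r₀ * hbar / 2) fun r hr m hm heq => by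
      rw [harg] at heq
      have := congrArg re heq
      simp only [ofReal_re, intCast_re] at this
      linarith [hd r hr, (Int.cast_nonpos (R := ℝ)).mpr hm]
    simpa only [harg, digamma_def, logDeriv_apply, ofReal_add] using hadm
end

section
/- Let ℓ, d, d′ be positive integers, and let c(q), c*(q) ∈ ℚ[q, q⁻¹] be Laurent polynomials that are invariant under the substitution q ↦ q⁻¹. In the field of rational functions ℚ(q), set v(q) := [d]_q·c(q)/[ℓ]_q and v*(q) := [d]_q·c*(q)/[ℓ]_q, and regard v and v* as formal Laurent series in q via the Laurent-series expansion of rational functions at q = 0; assume that v and v* have no nonzero coefficients in negative degrees, and write v^{(s)} and v*^{(s)} for their coefficients of q^s. Assume moreover that p(q) := ((q^{2d} − 1)/(q^{2ℓ} − 1))·(q^ℓ·c(q) + c*(q)) is a Laurent polynomial of the form p(q) = Σ_{r = d′−d}^{ℓ−d′−d} m_r·q^{−r} with m_r ∈ ℚ. Then for every integer r with d′ − d ≤ r ≤ ℓ − d′ − d one has m_r = v^{(r+d)} and m_r = v*^{(ℓ − d − r)}. -/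
/-! Since `q^{2n} - 1 = q^n (q - q⁻¹) [n]_q`, the hypothesis on `p` says `p = q^d v + q^{d-ℓ} v*`.
Reading off the coefficient of `q^{-r}` gives `m_r = v^{(-r-d)} + v*^{(ℓ-d-r)}`, and the first term
vanishes because `-r-d ≤ -d' < 0`.

As `c` and `c*` are symmetric, the substitution `q ↦ q⁻¹` in the cleared identity
`(q^{2d} - 1)(q^ℓ c + c*) = p (q^{2ℓ} - 1)` exchanges `c` and `c*` and replaces `p` by
`q^{2d-ℓ} p(q⁻¹)`, whose coefficients are the `m_r` in reverse order. The same coefficient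
comparison for the exchanged pair then gives `m_r = v^{(r+d)}`. -/

noncomputable section

/-- The quantum integer `[m]_q = Σ_{k=0}^{m−1} q^{m−1−2k}` as a formal Laurent series. -/
def qInt (m : ℕ) : LaurentSeries ℚ :=
  ∑ k ∈ Finset.range m, HahnSeries.single ((m : ℤ) - 1 - 2 * (k : ℤ)) (1 : ℚ)

/-- The Laurent polynomial with (finitely supported) coefficient function `c`, viewed as a
Laurent series. -/
def ofLaurentCoeffs (c : ℤ →₀ ℚ) : LaurentSeries ℚ :=
  ∑ r ∈ c.support, HahnSeries.single r (c r)

/-- `q^n` as a Laurent series. -/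
def qPow (n : ℤ) : LaurentSeries ℚ := HahnSeries.single n (1 : ℚ)

open HahnSeries

theorem qPow_add (a b : ℤ) : qPow (a + b) = qPow a * qPow b := by
  simp [qPow, single_mul_single]

theorem qPow_zero : qPow 0 = 1 := single_zero_one

theorem qPow_ne_zero (a : ℤ) : qPow a ≠ 0 := single_ne_zero one_ne_zero

theorem qPow_sub_qPow_ne_zero {a b : ℤ} (h : a ≠ b) : qPow a - qPow b ≠ 0 := by
  intro hab
  simpa [qPow, coeff_single, h] using congrArg (coeff · a) hab

theorem coeff_qPow_mul (a : ℤ) (x : LaurentSeries ℚ) (s : ℤ) :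
    (qPow a * x).coeff s = x.coeff (s - a) := by
  rw [qPow, coeff_single_mul, one_mul]

theorem coeff_qPow_sub_one_mul (a : ℤ) (x : LaurentSeries ℚ) (s : ℤ) :
    ((qPow a - 1) * x).coeff s = x.coeff (s - a) - x.coeff s := by
  rw [sub_mul, one_mul, coeff_sub, coeff_qPow_mul]

theorem coeff_ofLaurentCoeffs (c : ℤ →₀ ℚ) (s : ℤ) : (ofLaurentCoeffs c).coeff s = c s := by
  classical
  simp only [ofLaurentCoeffs, coeff_sum, coeff_single]
  convert Finset.sum_ite_eq c.support s c
  simp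

theorem coeff_ofLaurentCoeffs_neg {c : ℤ →₀ ℚ} (hc : ∀ r : ℤ, c r = c (-r)) (s : ℤ) :
    (ofLaurentCoeffs c).coeff (-s) = (ofLaurentCoeffs c).coeff s := by
  rw [coeff_ofLaurentCoeffs, coeff_ofLaurentCoeffs, hc s]

theorem coeff_sum_Icc_single_neg (a b : ℤ) (m : ℤ → ℚ) (s : ℤ) :
    (∑ r ∈ Finset.Icc a b, single (-r) (m r) : LaurentSeries ℚ).coeff s =
      if -s ∈ Finset.Icc a b then m (-s) else 0 := by
  classical
  simp only [coeff_sum, coeff_single, ← neg_eq_iff_eq_neg (a := s)]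
  convert Finset.sum_ite_eq (Finset.Icc a b) (-s) m

theorem coeff_sum_Icc_single_neg_reflect (a b : ℤ) (m : ℤ → ℚ) (s : ℤ) :
    (∑ r ∈ Finset.Icc a b, single (-r) (m (a + b - r)) : LaurentSeries ℚ).coeff s =
      (∑ r ∈ Finset.Icc a b, single (-r) (m r) : LaurentSeries ℚ).coeff (-(a + b) - s) := by
  simp only [coeff_sum_Icc_single_neg, Finset.mem_Icc]
  split_ifs <;> first | omega | ring_nf

theorem qPow_sub_qPow_neg_mul_qInt (n : ℕ) :
    (qPow 1 - qPow (-1)) * qInt n = qPow n - qPow (-n) := by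
  have hterm : ∀ k : ℕ, (qPow 1 - qPow (-1)) * single ((n : ℤ) - 1 - 2 * k) 1 =
      qPow (n - 2 * k) - qPow (n - 2 * (k + 1 : ℕ)) := by
    intro k
    rw [sub_mul, ← qPow, ← qPow_add, ← qPow_add]
    push_cast; ring_nf
  rw [qInt, Finset.mul_sum, Finset.sum_congr rfl fun k _ => hterm k, Finset.sum_range_sub']
  push_cast; ring_nf

theorem qPow_two_mul_sub_one (n : ℕ) :
    qPow (2 * n) - 1 = qPow n * ((qPow 1 - qPow (-1)) * qInt n) := by
  rw [qPow_sub_qPow_neg_mul_qInt, mul_sub, ← qPow_add, ← qPow_add, ← qPow_zero]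
  ring_nf

theorem qInt_ne_zero {n : ℕ} (hn : 0 < n) : qInt n ≠ 0 := by
  intro h
  have := qPow_sub_qPow_neg_mul_qInt n
  rw [h, mul_zero] at this
  exact qPow_sub_qPow_ne_zero (by omega) this.symm

theorem eq_qPow_mul_add_of_mul_eq {ℓ : ℕ} (hℓ : 0 < ℓ) (d : ℕ) {C Cs P : LaurentSeries ℚ}
    (h : (qPow (2 * d) - 1) * (qPow ℓ * C + Cs) = P * (qPow (2 * ℓ) - 1)) :
    P = qPow d * (qInt d * C / qInt ℓ) + qPow (d - ℓ) * (qInt d * Cs / qInt ℓ) := by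
  have hδ : qPow 1 - qPow (-1) ≠ 0 := qPow_sub_qPow_ne_zero (by norm_num)
  have hI := qInt_ne_zero hℓ
  have hshift : qPow (d - ℓ) * qPow ℓ = qPow d := by rw [← qPow_add, sub_add_cancel]
  rw [qPow_two_mul_sub_one, qPow_two_mul_sub_one] at h
  field_simp
  refine mul_left_cancel₀ (mul_ne_zero (qPow_ne_zero ℓ) hδ) ?_
  linear_combination -h - (qPow 1 - qPow (-1)) * qInt d * Cs * hshift

theorem qPow_sub_one_mul_swap_eq {a b e : ℤ} {C Cs P P' : LaurentSeries ℚ}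
    (hC : ∀ s, C.coeff (-s) = C.coeff s) (hCs : ∀ s, Cs.coeff (-s) = Cs.coeff s)
    (hP' : ∀ s, P'.coeff s = P.coeff (a + b - e - s))
    (h : (qPow a - 1) * (qPow b * C + Cs) = P * (qPow e - 1)) :
    (qPow a - 1) * (qPow b * Cs + C) = P' * (qPow e - 1) := by
  ext s
  -- the coefficient `s` of the claim is the coefficient `a + b - s` of `h`, read backwards
  have hs := congrArg (coeff · (a + b - s)) h
  simp only [mul_comm _ (qPow e - 1), coeff_qPow_sub_one_mul, coeff_add, coeff_qPow_mul,
    hP'] at hs ⊢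
  rw [← hC (s - a), ← hC s, ← hCs (s - b), ← hCs (s - a - b)]
  ring_nf at hs ⊢
  linarith

theorem coeff_of_sum_Icc_single_neg_eq {a b : ℤ} {m : ℤ → ℚ} {d ℓ : ℕ} {v vs : LaurentSeries ℚ}
    (h : ∑ r ∈ Finset.Icc a b, single (-r) (m r) = qPow d * v + qPow (d - ℓ) * vs)
    {r : ℤ} (hr : r ∈ Finset.Icc a b) : m r = v.coeff (-r - d) + vs.coeff (ℓ - d - r) := by
  have hr' := congrArg (coeff · (-r)) h
  simp only [coeff_sum_Icc_single_neg, neg_neg, if_pos hr, coeff_add, coeff_qPow_mul] at hr'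
  rw [hr']
  congr 2
  ring

theorem coeffs_of_p_eq_coeffs_of_v_general
    (ℓ d d' : ℕ) (hℓ : 0 < ℓ) (hd' : 0 < d')
    (c cs : ℤ →₀ ℚ) (hc : ∀ r : ℤ, c r = c (-r)) (hcs : ∀ r : ℤ, cs r = cs (-r))
    (v vs : LaurentSeries ℚ)
    (hv : v = qInt d * ofLaurentCoeffs c / qInt ℓ)
    (hvs : vs = qInt d * ofLaurentCoeffs cs / qInt ℓ)
    (hvpos : ∀ s : ℤ, s < 0 → v.coeff s = 0)
    (hvspos : ∀ s : ℤ, s < 0 → vs.coeff s = 0)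
    (m : ℤ → ℚ)
    (hp : (qPow (2 * (d : ℤ)) - 1) / (qPow (2 * (ℓ : ℤ)) - 1) *
        (qPow (ℓ : ℤ) * ofLaurentCoeffs c + ofLaurentCoeffs cs) =
      ∑ r ∈ Finset.Icc ((d' : ℤ) - (d : ℤ)) ((ℓ : ℤ) - (d' : ℤ) - (d : ℤ)),
        HahnSeries.single (-r) (m r)) :
    ∀ r : ℤ, (d' : ℤ) - (d : ℤ) ≤ r → r ≤ (ℓ : ℤ) - (d' : ℤ) - (d : ℤ) →
      m r = v.coeff (r + (d : ℤ)) ∧ m r = vs.coeff ((ℓ : ℤ) - (d : ℤ) - r) := by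
  intro r hr₁ hr₂
  have hden : qPow (2 * ℓ) - 1 ≠ 0 := by
    rw [qPow_two_mul_sub_one]
    exact mul_ne_zero (qPow_ne_zero _)
      (mul_ne_zero (qPow_sub_qPow_ne_zero (by norm_num)) (qInt_ne_zero hℓ))
  rw [div_mul_eq_mul_div, div_eq_iff hden] at hp
  have hp' := qPow_sub_one_mul_swap_eq (coeff_ofLaurentCoeffs_neg hc)
    (coeff_ofLaurentCoeffs_neg hcs)
    (P' := ∑ r ∈ Finset.Icc ((d' : ℤ) - d) (ℓ - d' - d),
      single (-r) (m ((d' - d) + (ℓ - d' - d) - r)))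
    (fun s => by rw [coeff_sum_Icc_single_neg_reflect]; ring_nf) hp
  have hpv := eq_qPow_mul_add_of_mul_eq hℓ d hp
  have hpv' := eq_qPow_mul_add_of_mul_eq hℓ d hp'
  rw [← hv, ← hvs] at hpv hpv'
  constructor
  · have h := coeff_of_sum_Icc_single_neg_eq hpv' (r := ℓ - 2 * d - r)
      (Finset.mem_Icc.2 ⟨by omega, by omega⟩)
    rw [hvspos _ (by omega), zero_add] at h
    convert h using 2 <;> ring
  · have h := coeff_of_sum_Icc_single_neg_eq hpv (Finset.mem_Icc.2 ⟨hr₁, hr₂⟩)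
    rwa [hvpos _ (by omega), zero_add] at h

theorem coeffs_of_p_eq_coeffs_of_v
    (ℓ d d' : ℕ) (hℓ : 0 < ℓ) (hd : 0 < d) (hd' : 0 < d')
    (c cs : ℤ →₀ ℚ) (hc : ∀ r : ℤ, c r = c (-r)) (hcs : ∀ r : ℤ, cs r = cs (-r))
    (v vs : LaurentSeries ℚ)
    (hv : v = qInt d * ofLaurentCoeffs c / qInt ℓ)
    (hvs : vs = qInt d * ofLaurentCoeffs cs / qInt ℓ)
    (hvpos : ∀ s : ℤ, s < 0 → v.coeff s = 0)
    (hvspos : ∀ s : ℤ, s < 0 → vs.coeff s = 0)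
    (m : ℤ → ℚ)
    (hp : (qPow (2 * (d : ℤ)) - 1) / (qPow (2 * (ℓ : ℤ)) - 1) *
        (qPow (ℓ : ℤ) * ofLaurentCoeffs c + ofLaurentCoeffs cs) =
      ∑ r ∈ Finset.Icc ((d' : ℤ) - (d : ℤ)) ((ℓ : ℤ) - (d' : ℤ) - (d : ℤ)),
        HahnSeries.single (-r) (m r)) :
    ∀ r : ℤ, (d' : ℤ) - (d : ℤ) ≤ r → r ≤ (ℓ : ℤ) - (d' : ℤ) - (d : ℤ) →
      m r = v.coeff (r + (d : ℤ)) ∧ m r = vs.coeff ((ℓ : ℤ) - (d : ℤ) - r) :=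
  coeffs_of_p_eq_coeffs_of_v_general ℓ d d' hℓ hd' c cs hc hcs v vs hv hvs hvpos hvspos m hp

end
end

section
/- Fix an integer n ≥ 2 and integers i, j with 1 ≤ i, j ≤ n − 1. Then the following identity holds in the ring ℤ[q, q⁻¹] of Laurent polynomials: (q² − 1)·(c_{i,n−j}(q) + qⁿ·c_{ij}(q)) = (q^{2n} − 1)·Σ_{b = max(i+j+1−n, 1)}^{min(i, j)} q^{2b − (i+j)}, where c_{kl}(q) := [n − max(k,l)]_q·[min(k,l)]_q. -/
noncomputable section

open LaurentPolynomial

/-- The quantum integer `[m]_q = Σ_{k=0}^{m−1} q^{m−1−2k}` as a Laurent polynomial. -/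
def qIntL (m : ℕ) : LaurentPolynomial ℤ :=
  ∑ k ∈ Finset.range m, T ((m : ℤ) - 1 - 2 * (k : ℤ))

/-- The entries `c_{kl}(q) = [n − max(k,l)]_q · [min(k,l)]_q` of `[n]_q·B(q)⁻¹` for `sl_n`. -/
def cEntry (n k l : ℕ) : LaurentPolynomial ℤ :=
  qIntL (n - max k l) * qIntL (min k l)

/-!
Multiplying by `(q − q⁻¹)²` clears all quantum integers. With `A = |i − j|` and `B = |n − i − j|`,
`(q − q⁻¹)² c_{ij} = q^{n−A} + q^{A−n} − q^B − q^{−B}`, and `(q − q⁻¹)² c_{i,n−j}` is the same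
expression with `A` and `B` exchanged; on the other side `(q − q⁻¹)` times the sum telescopes to
`q^{1−A} − q^{1−n+B}`. What remains,
`(q^{n−B} + q^{B−n} − q^A − q^{−A}) + qⁿ (q^{n−A} + q^{A−n} − q^B − q^{−B})
  = (q^{2n} − 1)(q^{−A} − q^{B−n})`,
is checked by expanding.
-/

local notation "δ" => (T 1 - T (-1) : LaurentPolynomial ℤ)

lemma T_one_sub_T_neg_one_ne_zero : δ ≠ 0 := by
  intro h
  simpa using congrArg (fun f : LaurentPolynomial ℤ => f.coeff 1) h

lemma T_one_sub_T_neg_one_mul_T (a : ℤ) : δ * T a = T (a + 1) - T (a - 1) := by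
  rw [sub_mul, ← T_add, ← T_add]
  ring_nf

lemma T_two_sub_one : (T 2 - 1 : LaurentPolynomial ℤ) = T 1 * δ := by
  rw [mul_sub, ← T_add, ← T_add]
  norm_num [T_zero]

lemma T_one_sub_T_neg_one_mul_qIntL (m : ℕ) : δ * qIntL m = T m - T (-m) := by
  have telescope := Finset.sum_range_sub' (fun k : ℕ => (T (m - 2 * k) : LaurentPolynomial ℤ)) m
  rw [qIntL, Finset.mul_sum]
  convert telescope using 2 with k
  · rw [T_one_sub_T_neg_one_mul_T]
    push_cast
    ring_nf
  · simp
  · ring_nf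

lemma T_one_sub_T_neg_one_mul_sum_Icc {L U : ℕ} (c : ℤ) (h : L ≤ U + 1) :
    δ * ∑ b ∈ Finset.Icc L U, T (2 * (b : ℤ) - c) = T (2 * U + 1 - c) - T (2 * L - 1 - c) := by
  have telescope := Finset.sum_Ico_sub (fun b : ℕ => (T (2 * b - 1 - c) : LaurentPolynomial ℤ)) h
  rw [← Finset.Ico_add_one_right_eq_Icc, Finset.mul_sum]
  convert telescope using 2 with b
  · rw [T_one_sub_T_neg_one_mul_T]
    push_cast
    ring_nf
  · push_cast
    ring_nf

lemma T_add_T_neg_abs (x : ℤ) :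
    (T |x| + T (-|x|) : LaurentPolynomial ℤ) = T x + T (-x) := by
  rcases abs_cases x with ⟨h, -⟩ | ⟨h, -⟩ <;> rw [h]
  rw [neg_neg, add_comm]

lemma T_one_sub_T_neg_one_sq_mul_cEntry {n k l : ℕ} (hk : k ≤ n) (hl : l ≤ n) :
    δ ^ 2 * cEntry n k l =
      T (n - |(k : ℤ) - l|) + T (|(k : ℤ) - l| - n) -
        (T |(n : ℤ) - k - l| + T (-|(n : ℤ) - k - l|)) := by
  wlog hkl : k ≤ l generalizing k l
  · have := this hl hk (by omega)
    rwa [cEntry, max_comm, min_comm, ← cEntry, abs_sub_comm, sub_right_comm] at this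
  have factor (a : ℕ) (b : ℕ) : δ ^ 2 * (qIntL a * qIntL b) = (T a - T (-a)) * (T b - T (-b)) := by
    rw [← T_one_sub_T_neg_one_mul_qIntL, ← T_one_sub_T_neg_one_mul_qIntL]
    ring
  rw [cEntry, max_eq_right hkl, min_eq_left hkl, factor, T_add_T_neg_abs,
    abs_of_nonpos (by omega), Nat.cast_sub hl]
  simp only [mul_sub, sub_mul, ← T_add]
  ring_nf

lemma T_one_sub_T_neg_one_sq_mul_cEntry_sub {n i j : ℕ} (hi : i ≤ n) (hj : j ≤ n) :
    δ ^ 2 * cEntry n i (n - j) =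
      T (n - |(n : ℤ) - i - j|) + T (|(n : ℤ) - i - j| - n) -
        (T |(i : ℤ) - j| + T (-|(i : ℤ) - j|)) := by
  rw [T_one_sub_T_neg_one_sq_mul_cEntry hi (Nat.sub_le n j), Nat.cast_sub hj,
    show |(i : ℤ) - (n - j)| = |(n : ℤ) - i - j| by rw [abs_sub_comm, sub_right_comm],
    show (n : ℤ) - i - (n - j) = -((i : ℤ) - j) by ring, abs_neg, T_add_T_neg_abs]

lemma T_one_sub_T_neg_one_mul_sum_Icc_max_min {n i j : ℕ} (hi : i ≤ n) (hj : j ≤ n) :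
    δ * ∑ b ∈ Finset.Icc (max (i + j + 1 - n) 1) (min i j), T (2 * (b : ℤ) - ((i : ℤ) + (j : ℤ))) =
      T 1 * (T (-|(i : ℤ) - j|) - T (|(n : ℤ) - i - j| - n)) := by
  have hU : 2 * ((min i j : ℕ) : ℤ) = i + j - |(i : ℤ) - j| := by
    rcases abs_cases ((i : ℤ) - j) with ⟨h, h'⟩ | ⟨h, h'⟩ <;> omega
  have hL : 2 * ((max (i + j + 1 - n) 1 : ℕ) : ℤ) = i + j + 2 - n + |(n : ℤ) - i - j| := by
    rcases abs_cases ((n : ℤ) - i - j) with ⟨h, h'⟩ | ⟨h, h'⟩ <;> omega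
  rw [T_one_sub_T_neg_one_mul_sum_Icc _ (by omega), mul_sub, ← T_add, ← T_add]
  congr 2 <;> linarith

lemma T_add_T_neg_combination (n A B : ℤ) :
    (T (n - B) + T (B - n) - (T A + T (-A)) + T n * (T (n - A) + T (A - n) - (T B + T (-B))) :
        LaurentPolynomial ℤ) = (T (2 * n) - 1) * (T (-A) - T (B - n)) := by
  simp only [mul_sub, sub_mul, mul_add, ← T_add, one_mul]
  ring_nf

theorem laurent_identity_sln_general
    (n i j : ℕ) (hi₂ : i ≤ n - 1) (hj₂ : j ≤ n - 1) :
    (T 2 - 1) * (cEntry n i (n - j) + T (n : ℤ) * cEntry n i j) =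
      (T (2 * (n : ℤ)) - 1) *
        ∑ b ∈ Finset.Icc (max (i + j + 1 - n) 1) (min i j),
          T (2 * (b : ℤ) - ((i : ℤ) + (j : ℤ))) := by
  have hi : i ≤ n := by omega
  have hj : j ≤ n := by omega
  apply mul_left_cancel₀ (pow_ne_zero 2 T_one_sub_T_neg_one_ne_zero)
  calc δ ^ 2 * ((T 2 - 1) * (cEntry n i (n - j) + T n * cEntry n i j))
      = T 1 * δ * (δ ^ 2 * cEntry n i (n - j) + T n * (δ ^ 2 * cEntry n i j)) := by
        rw [T_two_sub_one]; ring
    _ = T 1 * δ * ((T (2 * n) - 1) * (T (-|(i : ℤ) - j|) - T (|(n : ℤ) - i - j| - n))) := by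
        rw [T_one_sub_T_neg_one_sq_mul_cEntry_sub hi hj, T_one_sub_T_neg_one_sq_mul_cEntry hi hj,
          T_add_T_neg_combination]
    _ = δ * (T (2 * n) - 1) * (δ * ∑ b ∈ Finset.Icc (max (i + j + 1 - n) 1) (min i j),
          T (2 * (b : ℤ) - ((i : ℤ) + (j : ℤ)))) := by
        rw [T_one_sub_T_neg_one_mul_sum_Icc_max_min hi hj]; ring
    _ = _ := by ring

theorem laurent_identity_sln
    (n i j : ℕ) (hn : 2 ≤ n) (hi₁ : 1 ≤ i) (hi₂ : i ≤ n - 1) (hj₁ : 1 ≤ j) (hj₂ : j ≤ n - 1) :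
    (T 2 - 1) * (cEntry n i (n - j) + T (n : ℤ) * cEntry n i j) =
      (T (2 * (n : ℤ)) - 1) *
        ∑ b ∈ Finset.Icc (max (i + j + 1 - n) 1) (min i j),
          T (2 * (b : ℤ) - ((i : ℤ) + (j : ℤ))) :=
  laurent_identity_sln_general n i j hi₂ hj₂

end
end

section
/- Fix an integer n ≥ 2 and integers i, j with 1 ≤ i, j ≤ n − 1. Then the following identity holds in ℤ[q, q⁻¹]: (1 − q^{2n})·c_{ij}(q) = [n]_q·(P_{ij}(q) − qⁿ·P_{i,n−j}(q)), where c_{kl}(q) := [n − max(k,l)]_q·[min(k,l)]_q and P_{kl}(q) := Σ_{b = max(k+l+1−n, 1)}^{min(k, l)} q^{k+l+1−2b}. Consequently, the expansion of the rational function v_{ij}(q) := c_{ij}(q)/[n]_q as a formal Laurent series at q = 0 has no nonzero coefficients in negative degrees, and for every integer s with 1 ≤ s ≤ n − 1 its coefficient of q^s equals 1 if s = i + j + 1 − 2b for some integer b with max(i+j+1−n, 1) ≤ b ≤ min(i, j), and equals 0 otherwise. -/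
/-!
Multiplying by `(q - q⁻¹)²` makes every quantum integer and every `P_{kl}` telescope to a
difference of two monomials, `(q - q⁻¹) P_{kl} = q^(n - |k + l - n|) - q^|k - l|`, so the
identity becomes one between monomials, in which `c = i + j - n` enters only through
`q^c + q^(-c)` and may therefore be replaced by `|c|`.

For the series, `v = c_{ij} / [n]` satisfies `(1 - q^(2n)) v = g := P_{ij} - qⁿ P_{i,n-j}`, and
`g` has only positive exponents. Hence `v_s = g_s + v_(s - 2n)`: the lowest term of `v` cannot
sit in negative degree, and below degree `n` the coefficients of `v` are those of `P_{ij}`.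
-/

noncomputable section

open LaurentPolynomial

/-- `P_{kl}(q) = Σ_{b = max(k+l+1−n,1)}^{min(k,l)} q^{k+l+1−2b}`. -/
def pEntry (n k l : ℕ) : LaurentPolynomial ℤ :=
  ∑ b ∈ Finset.Icc (max (k + l + 1 - n) 1) (min k l), T ((k : ℤ) + (l : ℤ) + 1 - 2 * (b : ℤ))

/-- The quantum integer `[m]_q` as a formal Laurent series over `ℚ`. -/
def qIntS (m : ℕ) : LaurentSeries ℚ :=
  ∑ k ∈ Finset.range m, HahnSeries.single ((m : ℤ) - 1 - 2 * (k : ℤ)) (1 : ℚ)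

/-- The entries `c_{kl}(q)` as formal Laurent series over `ℚ`. -/
def cEntryS (n k l : ℕ) : LaurentSeries ℚ :=
  qIntS (n - max k l) * qIntS (min k l)

section LaurentPolynomialIdentities

variable {R : Type*} [CommRing R]

theorem T_sub_T_neg_one_mul_T (a : ℤ) :
    (T 1 - T (-1) : R[T;T⁻¹]) * T a = T (a + 1) - T (a - 1) := by
  simp only [sub_mul, ← T_add]; ring_nf

theorem T_sub_T_neg_mul_T_sub_T_neg (n M m : ℤ) :
    (T (n - M) - T (-(n - M)) : R[T;T⁻¹]) * (T m - T (-m)) =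
      T (n - (M - m)) + T (M - m - n) - T (M + m - n) - T (-(M + m - n)) := by
  simp only [sub_mul, mul_sub, ← T_add]; ring_nf

theorem one_sub_T_mul_eq_T_sub_T_neg_mul (n a c : ℤ) :
    (1 - T (2 * n) : R[T;T⁻¹]) * (T (n - a) + T (a - n) - T c - T (-c)) =
      (T n - T (-n)) * (T (n - |c|) - T a - T n * (T (n - a) - T |c|)) := by
  rcases abs_choice c with h | h <;> rw [h] <;>
    simp only [mul_sub, sub_mul, mul_add, one_mul, ← T_add] <;> ring_nf

theorem T_sub_T_neg_one_ne_zero [Nontrivial R] : (T 1 - T (-1) : R[T;T⁻¹]) ≠ 0 := by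
  intro h
  have := congrArg (fun f : R[T;T⁻¹] => f.coeff 1) (sub_eq_zero.mp h)
  simp [T_apply] at this

end LaurentPolynomialIdentities

theorem T_sub_T_neg_one_mul_qIntL (m : ℕ) :
    (T 1 - T (-1)) * qIntL m = T m - T (-m) := by
  have hterm : ∀ k ∈ Finset.range m, (T 1 - T (-1) : ℤ[T;T⁻¹]) * T ((m : ℤ) - 1 - 2 * k) =
      T ((m : ℤ) - 2 * k) - T ((m : ℤ) - 2 * (k + 1 : ℕ)) := by
    intro k _
    rw [T_sub_T_neg_one_mul_T]; push_cast; ring_nf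
  rw [qIntL, Finset.mul_sum, Finset.sum_congr rfl hterm, Finset.sum_range_sub']
  congr 2; ring

theorem T_sub_T_neg_one_mul_pEntry {n k l : ℕ} (hk₁ : 1 ≤ k) (hk₂ : k < n) (hl₁ : 1 ≤ l)
    (hl₂ : l < n) :
    (T 1 - T (-1)) * pEntry n k l = T (n - |(k : ℤ) + l - n|) - T |(k : ℤ) - l| := by
  have hterm : ∀ b ∈ Finset.Icc (max (k + l + 1 - n) 1) (min k l),
      (T 1 - T (-1) : ℤ[T;T⁻¹]) * T ((k : ℤ) + l + 1 - 2 * b) =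
        -(T ((k : ℤ) + l + 2 - 2 * (b + 1 : ℕ)) - T ((k : ℤ) + l + 2 - 2 * b)) := by
    intro b _
    rw [T_sub_T_neg_one_mul_T]; push_cast; ring_nf
  rw [pEntry, Finset.mul_sum, Finset.sum_congr rfl hterm, Finset.sum_neg_distrib,
    Finset.sum_Icc_sub (f := fun b : ℕ => (T ((k : ℤ) + l + 2 - 2 * b) : ℤ[T;T⁻¹])) (by omega),
    neg_sub]
  congr 1 <;> congr 1 <;> rw [abs_eq_max_neg] <;> omega

theorem sq_T_sub_T_neg_one_mul_cEntry {n k l : ℕ} (hk : k ≤ n) (hl : l ≤ n) :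
    (T 1 - T (-1)) ^ 2 * cEntry n k l =
      T (n - |(k : ℤ) - l|) + T (|(k : ℤ) - l| - n) - T ((k : ℤ) + l - n) -
        T (-((k : ℤ) + l - n)) := by
  have hdiff : max (k : ℤ) l - min (k : ℤ) l = |(k : ℤ) - l| := by rw [abs_eq_max_neg]; omega
  have hsum : max (k : ℤ) l + min (k : ℤ) l = k + l := by omega
  rw [cEntry, sq, mul_mul_mul_comm, T_sub_T_neg_one_mul_qIntL, T_sub_T_neg_one_mul_qIntL,
    Nat.cast_sub (max_le hk hl), Nat.cast_max, Nat.cast_min,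
    T_sub_T_neg_mul_T_sub_T_neg, hdiff, hsum]

theorem one_sub_T_mul_cEntry {n i j : ℕ} (hi₁ : 1 ≤ i) (hi₂ : i < n) (hj₁ : 1 ≤ j)
    (hj₂ : j < n) :
    (1 - T (2 * (n : ℤ))) * cEntry n i j =
      qIntL n * (pEntry n i j - T (n : ℤ) * pEntry n i (n - j)) := by
  have hsub : (i : ℤ) + ((n - j : ℕ) : ℤ) - n = i - j := by omega
  have hsub' : (i : ℤ) - ((n - j : ℕ) : ℤ) = i + j - n := by omega
  apply mul_left_cancel₀ (pow_ne_zero 2 T_sub_T_neg_one_ne_zero)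
  calc (T 1 - T (-1)) ^ 2 * ((1 - T (2 * (n : ℤ))) * cEntry n i j)
      = (1 - T (2 * (n : ℤ))) * ((T 1 - T (-1)) ^ 2 * cEntry n i j) := by ring
    _ = ((T 1 - T (-1)) * qIntL n) * ((T 1 - T (-1)) * pEntry n i j
          - T (n : ℤ) * ((T 1 - T (-1)) * pEntry n i (n - j))) := by
      rw [sq_T_sub_T_neg_one_mul_cEntry hi₂.le hj₂.le, one_sub_T_mul_eq_T_sub_T_neg_mul,
        T_sub_T_neg_one_mul_qIntL, T_sub_T_neg_one_mul_pEntry hi₁ hi₂ hj₁ hj₂,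
        T_sub_T_neg_one_mul_pEntry hi₁ hi₂ (by omega) (by omega), hsub, hsub']
    _ = _ := by ring

theorem HahnSeries.coeff_one_sub_single_mul {R : Type*} [Ring R] (N s : ℤ)
    (f : LaurentSeries R) :
    ((1 - single N 1) * f).coeff s = f.coeff s - f.coeff (s - N) := by
  rw [sub_mul, one_mul, coeff_sub, coeff_single_mul, one_mul]

theorem HahnSeries.coeff_eq_zero_of_neg_of_one_sub_single_mul {R : Type*} [Ring R] {N : ℤ}
    (hN : 0 < N) {f : LaurentSeries R} (hf : ∀ s < 0, ((1 - single N 1) * f).coeff s = 0) :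
    ∀ s < 0, f.coeff s = 0 := by
  intro s hs
  rcases eq_or_ne f 0 with rfl | hf0
  · rfl
  have horder : 0 ≤ f.order := by
    by_contra! h
    have := hf f.order h
    rw [coeff_one_sub_single_mul,
      coeff_eq_zero_of_lt_order (x := f) (by omega : f.order - N < f.order), sub_zero] at this
    exact hf0 (coeff_order_eq_zero.mp this)
  exact coeff_eq_zero_of_lt_order (by omega)

theorem qIntS_ne_zero {m : ℕ} (hm : m ≠ 0) : qIntS m ≠ 0 := by
  intro h
  have hlead : (qIntS m).coeff ((m : ℤ) - 1) = 1 := by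
    rw [qIntS, HahnSeries.coeff_sum, Finset.sum_eq_single 0]
    · simp
    · intro k hk hk0
      rw [Finset.mem_range] at hk
      exact HahnSeries.coeff_single_of_ne (by omega)
    · simp [Nat.pos_of_ne_zero hm]
  simp [h] at hlead

def toLaurentSeries : ℤ[T;T⁻¹] →+* LaurentSeries ℚ :=
  eval₂ (Int.castRingHom _)
    (Units.mk0 (HahnSeries.single 1 1) (HahnSeries.single_ne_zero one_ne_zero))

theorem toLaurentSeries_T (a : ℤ) : toLaurentSeries (T a) = HahnSeries.single a 1 := by
  rw [toLaurentSeries, eval₂_T, Units.val_zpow_eq_zpow_val, Units.val_mk0]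
  exact (RatFunc.single_zpow a).symm

theorem toLaurentSeries_qIntL (m : ℕ) : toLaurentSeries (qIntL m) = qIntS m := by
  simp only [qIntL, qIntS, map_sum, toLaurentSeries_T]

theorem toLaurentSeries_cEntry (n k l : ℕ) : toLaurentSeries (cEntry n k l) = cEntryS n k l := by
  rw [cEntry, cEntryS, map_mul, toLaurentSeries_qIntL, toLaurentSeries_qIntL]

open scoped Classical in
theorem coeff_toLaurentSeries_pEntry (n k l : ℕ) (s : ℤ) :
    (toLaurentSeries (pEntry n k l)).coeff s =
      if ∃ b : ℤ, max ((k : ℤ) + l + 1 - n) 1 ≤ b ∧ b ≤ min (k : ℤ) l ∧ s = k + l + 1 - 2 * b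
      then 1 else 0 := by
  simp only [pEntry, map_sum, toLaurentSeries_T, HahnSeries.coeff_sum, HahnSeries.coeff_single]
  split_ifs with hs
  · obtain ⟨b, hb₁, hb₂, rfl⟩ := hs
    rw [Finset.sum_eq_single b.toNat]
    · rw [if_pos (by omega)]
    · intro c _ hcb
      rw [if_neg (by omega)]
    · intro hb
      simp only [Finset.mem_Icc, not_and_or, not_le] at hb
      omega
  · refine Finset.sum_eq_zero fun b hb => if_neg fun hsb => hs ⟨b, ?_⟩
    rw [Finset.mem_Icc] at hb
    omega

theorem coeff_toLaurentSeries_pEntry_of_nonpos (n k l : ℕ) {s : ℤ} (hs : s ≤ 0) :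
    (toLaurentSeries (pEntry n k l)).coeff s = 0 := by
  rw [coeff_toLaurentSeries_pEntry, if_neg]
  rintro ⟨b, -, hb, rfl⟩
  omega

theorem laurent_identity_and_vij_coeffs_sln_general
    (n i j : ℕ) (hi₁ : 1 ≤ i) (hi₂ : i ≤ n - 1) (hj₁ : 1 ≤ j) (hj₂ : j ≤ n - 1) :
    (1 - T (2 * (n : ℤ))) * cEntry n i j =
        qIntL n * (pEntry n i j - T (n : ℤ) * pEntry n i (n - j)) ∧
      (∀ s : ℤ, s < 0 → (cEntryS n i j / qIntS n).coeff s = 0) ∧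
      (∀ s : ℤ, 1 ≤ s → s ≤ (n : ℤ) - 1 →
        ((∃ b : ℤ, max ((i : ℤ) + (j : ℤ) + 1 - (n : ℤ)) 1 ≤ b ∧ b ≤ min (i : ℤ) (j : ℤ) ∧
            s = (i : ℤ) + (j : ℤ) + 1 - 2 * b) →
          (cEntryS n i j / qIntS n).coeff s = 1) ∧
        ((¬ ∃ b : ℤ, max ((i : ℤ) + (j : ℤ) + 1 - (n : ℤ)) 1 ≤ b ∧ b ≤ min (i : ℤ) (j : ℤ) ∧
            s = (i : ℤ) + (j : ℤ) + 1 - 2 * b) →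
          (cEntryS n i j / qIntS n).coeff s = 0)) := by
  have hkey := one_sub_T_mul_cEntry hi₁ (by omega) hj₁ (by omega : j < n)
  have hv : (1 - HahnSeries.single (2 * (n : ℤ)) 1) * (cEntryS n i j / qIntS n) =
      toLaurentSeries (pEntry n i j) -
        HahnSeries.single (n : ℤ) 1 * toLaurentSeries (pEntry n i (n - j)) := by
    have hmap := congrArg toLaurentSeries hkey
    simp only [map_mul, map_sub, map_one, toLaurentSeries_T, toLaurentSeries_qIntL,
      toLaurentSeries_cEntry] at hmap
    rw [← mul_div_assoc, hmap, mul_div_cancel_left₀ _ (qIntS_ne_zero (by omega))]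
  have hlow : ∀ s ≤ (n : ℤ) - 1,
      ((1 - HahnSeries.single (2 * (n : ℤ)) 1) * (cEntryS n i j / qIntS n)).coeff s =
        (toLaurentSeries (pEntry n i j)).coeff s := by
    intro s hs
    rw [hv, HahnSeries.coeff_sub, HahnSeries.coeff_single_mul, one_mul,
      coeff_toLaurentSeries_pEntry_of_nonpos _ _ _ (by omega : s - n ≤ 0), sub_zero]
  have hneg := HahnSeries.coeff_eq_zero_of_neg_of_one_sub_single_mul (N := 2 * n) (by omega)
    fun s hs => by rw [hlow s (by omega), coeff_toLaurentSeries_pEntry_of_nonpos _ _ _ hs.le]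
  refine ⟨hkey, hneg, fun s hs₁ hs₂ => ?_⟩
  have hmid := hlow s hs₂
  rw [HahnSeries.coeff_one_sub_single_mul, hneg (s - 2 * n) (by omega), sub_zero,
    coeff_toLaurentSeries_pEntry] at hmid
  rw [hmid]
  exact ⟨fun h => if_pos h, fun h => if_neg h⟩

theorem laurent_identity_and_vij_coeffs_sln
    (n i j : ℕ) (hn : 2 ≤ n) (hi₁ : 1 ≤ i) (hi₂ : i ≤ n - 1) (hj₁ : 1 ≤ j) (hj₂ : j ≤ n - 1) :
    (1 - T (2 * (n : ℤ))) * cEntry n i j =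
        qIntL n * (pEntry n i j - T (n : ℤ) * pEntry n i (n - j)) ∧
      (∀ s : ℤ, s < 0 → (cEntryS n i j / qIntS n).coeff s = 0) ∧
      (∀ s : ℤ, 1 ≤ s → s ≤ (n : ℤ) - 1 →
        ((∃ b : ℤ, max ((i : ℤ) + (j : ℤ) + 1 - (n : ℤ)) 1 ≤ b ∧ b ≤ min (i : ℤ) (j : ℤ) ∧
            s = (i : ℤ) + (j : ℤ) + 1 - 2 * b) →
          (cEntryS n i j / qIntS n).coeff s = 1) ∧
        ((¬ ∃ b : ℤ, max ((i : ℤ) + (j : ℤ) + 1 - (n : ℤ)) 1 ≤ b ∧ b ≤ min (i : ℤ) (j : ℤ) ∧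
            s = (i : ℤ) + (j : ℤ) + 1 - 2 * b) →
          (cEntryS n i j / qIntS n).coeff s = 0)) :=
  laurent_identity_and_vij_coeffs_sln_general n i j hi₁ hi₂ hj₁ hj₂

end
end

section
/- Fix a nonzero complex number ħ. Let p ≥ 1 be an integer, a_1, …, a_p ∈ ℂ, and r_1, …, r_p nonnegative integers. Set N(u) := Π_{k=1}^p (u − a_k − ħ)(u − a_k + r_k·ħ), and for each tuple s = (s_1, …, s_p) of integers with 0 ≤ s_k ≤ r_k set D_s(u) := Π_{k=1}^p (u − a_k + (s_k − 1)ħ)(u − a_k + s_k·ħ). Then for every index 1 ≤ k ≤ p and every integer t with 0 ≤ t ≤ r_k − 1, there exists such a tuple s for which the point z = a_k − tħ is a pole of the rational function N(u)/D_s(u); that is, the multiplicity of z as a root of the polynomial D_s strictly exceeds the multiplicity of z as a root of the polynomial N. -/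
/-!
Both `N` and `D_s` are products of one quadratic factor per index, so the multiplicity of `z`
is a sum over the indices and it suffices to compare factor by factor. For `k` itself take
`s_k = t`: since `t < r_k` and `ħ ≠ 0`, `z = a_k - tħ` is a root of the `D`-factor but of
neither `N`-factor root `a_k + ħ`, `a_k - r_k ħ`. For every other index one of `s = r` (when
`z = a - rħ`) or `s = 0` (which puts `a + ħ` among the `D`-roots) makes the `D`-factor
vanish at `z` at least as often as the `N`-factor.
-/

open Polynomial

section RootMultiplicity

variable {R : Type*} [CommRing R] [IsDomain R]

theorem Polynomial.rootMultiplicity_prod {ι : Type*} (s : Finset ι) (f : ι → R[X])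
    (hf : ∀ i ∈ s, f i ≠ 0) (x : R) :
    (∏ i ∈ s, f i).rootMultiplicity x = ∑ i ∈ s, (f i).rootMultiplicity x := by
  classical
  rw [← count_roots, roots_prod f s (Finset.prod_ne_zero_iff.2 hf), Multiset.count_bind]
  simp only [count_roots]
  rfl

theorem Polynomial.rootMultiplicity_prod_lt_prod {ι : Type*} [Fintype ι] {f g : ι → R[X]}
    (hf : ∀ i, f i ≠ 0) (hg : ∀ i, g i ≠ 0) {x : R}
    (hle : ∀ i, (f i).rootMultiplicity x ≤ (g i).rootMultiplicity x)
    (hlt : ∃ i, (f i).rootMultiplicity x < (g i).rootMultiplicity x) :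
    (∏ i, f i).rootMultiplicity x < (∏ i, g i).rootMultiplicity x := by
  rw [rootMultiplicity_prod _ _ (fun i _ => hf i), rootMultiplicity_prod _ _ (fun i _ => hg i)]
  obtain ⟨i, hi⟩ := hlt
  exact Finset.sum_lt_sum (fun i _ => hle i) ⟨i, Finset.mem_univ i, hi⟩

theorem Polynomial.rootMultiplicity_X_sub_C_mul_X_sub_C [DecidableEq R] (x α β : R) :
    ((X - C α) * (X - C β)).rootMultiplicity x =
      (if x = α then 1 else 0) + (if x = β then 1 else 0) := by
  rw [rootMultiplicity_mul (mul_ne_zero (X_sub_C_ne_zero α) (X_sub_C_ne_zero β)),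
    rootMultiplicity_X_sub_C, rootMultiplicity_X_sub_C]

end RootMultiplicity

section Factors

variable {K : Type*} [Field K] {ħ : K}

/-- The factor of `N(u)` belonging to an index with parameters `a`, `r`. -/
noncomputable def numFactor (ħ a : K) (r : ℕ) : K[X] :=
  (X - C (a + ħ)) * (X - C (a - r * ħ))

/-- The factor of `D_s(u)` belonging to an index with parameters `a`, `s`. -/
noncomputable def denFactor (ħ a : K) (s : ℕ) : K[X] :=
  (X - C (a - (s - 1) * ħ)) * (X - C (a - s * ħ))

theorem numFactor_ne_zero (ħ a : K) (r : ℕ) : numFactor ħ a r ≠ 0 :=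
  mul_ne_zero (X_sub_C_ne_zero _) (X_sub_C_ne_zero _)

theorem denFactor_ne_zero (ħ a : K) (s : ℕ) : denFactor ħ a s ≠ 0 :=
  mul_ne_zero (X_sub_C_ne_zero _) (X_sub_C_ne_zero _)

theorem sub_natCast_mul_ne_add [CharZero K] (hħ : ħ ≠ 0) (a : K) (n : ℕ) : a - n * ħ ≠ a + ħ := by
  intro h
  have : ((n : K) + 1) * ħ = 0 := by linear_combination -h
  exact mul_ne_zero (Nat.cast_add_one_ne_zero n) hħ this

theorem sub_natCast_mul_inj [CharZero K] (hħ : ħ ≠ 0) (a : K) {m n : ℕ} :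
    a - m * ħ = a - n * ħ ↔ m = n := by
  rw [sub_right_inj, mul_left_inj' hħ, Nat.cast_inj]

theorem exists_rootMultiplicity_numFactor_le_denFactor [CharZero K] (hħ : ħ ≠ 0) (a x : K) (r : ℕ) :
    ∃ s ≤ r, (numFactor ħ a r).rootMultiplicity x ≤ (denFactor ħ a s).rootMultiplicity x := by
  classical
  by_cases hx : x = a - r * ħ
  · refine ⟨r, le_rfl, ?_⟩
    have hx' : x ≠ a + ħ := hx ▸ sub_natCast_mul_ne_add hħ a r
    rw [numFactor, denFactor, rootMultiplicity_X_sub_C_mul_X_sub_C,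
      rootMultiplicity_X_sub_C_mul_X_sub_C, if_neg hx', if_pos hx]
    omega
  · refine ⟨0, Nat.zero_le r, ?_⟩
    have h0 : a - ((0 : ℕ) - 1) * ħ = a + ħ := by push_cast; ring
    rw [numFactor, denFactor, h0, rootMultiplicity_X_sub_C_mul_X_sub_C,
      rootMultiplicity_X_sub_C_mul_X_sub_C, if_neg hx]
    omega

theorem rootMultiplicity_numFactor_lt_denFactor [CharZero K] (hħ : ħ ≠ 0) (a : K) {t r : ℕ} (ht : t < r) :
    (numFactor ħ a r).rootMultiplicity (a - t * ħ) <
      (denFactor ħ a t).rootMultiplicity (a - t * ħ) := by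
  classical
  have hne : a - t * ħ ≠ a - r * ħ := fun h => ht.ne ((sub_natCast_mul_inj hħ a).1 h)
  rw [numFactor, denFactor, rootMultiplicity_X_sub_C_mul_X_sub_C,
    rootMultiplicity_X_sub_C_mul_X_sub_C, if_neg (sub_natCast_mul_ne_add hħ a t), if_neg hne,
    if_pos rfl]
  omega

end Factors

theorem exists_tuple_pole_of_eigenvalue_general
    (hbar : ℂ) (hhbar : hbar ≠ 0) (p : ℕ) (a : Fin p → ℂ) (r : Fin p → ℕ) :
    ∀ (k : Fin p) (t : ℕ), t < r k →
      ∃ s : Fin p → ℕ, (∀ k' : Fin p, s k' ≤ r k') ∧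
        (∏ k' : Fin p,
            ((X - C (a k' + hbar)) * (X - C (a k' - (r k' : ℂ) * hbar)))).rootMultiplicity
              (a k - (t : ℂ) * hbar) <
          (∏ k' : Fin p,
              ((X - C (a k' - ((s k' : ℂ) - 1) * hbar)) *
                (X - C (a k' - (s k' : ℂ) * hbar)))).rootMultiplicity
            (a k - (t : ℂ) * hbar) := by
  classical
  intro k t ht
  choose σ hσr hσ using fun k' =>
    exists_rootMultiplicity_numFactor_le_denFactor hhbar (a k') (a k - t * hbar) (r k')
  refine ⟨Function.update σ k t, fun k' => ?_, ?_⟩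
  · rcases eq_or_ne k' k with rfl | hk
    · simpa using ht.le
    · simpa [Function.update_of_ne hk] using hσr k'
  · refine rootMultiplicity_prod_lt_prod (f := fun k' => numFactor hbar (a k') (r k'))
      (g := fun k' => denFactor hbar (a k') (Function.update σ k t k'))
      (fun _ => numFactor_ne_zero _ _ _) (fun _ => denFactor_ne_zero _ _ _) (fun k' => ?_)
      ⟨k, by simpa using rootMultiplicity_numFactor_lt_denFactor hhbar (a k) ht⟩
    rcases eq_or_ne k' k with rfl | hk
    · simpa using (rootMultiplicity_numFactor_lt_denFactor hhbar (a k') ht).le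
    · simpa [Function.update_of_ne hk] using hσ k'

/-- For each `k` and `0 ≤ t ≤ r_k − 1` there is a tuple `s` (with
`0 ≤ s_k ≤ r_k`) such that `z = a_k − tħ` is a pole of `N(u)/D_s(u)`: the multiplicity of
`z` as a root of `D_s` strictly exceeds its multiplicity as a root of `N`. -/
theorem exists_tuple_pole_of_eigenvalue
    (hbar : ℂ) (hhbar : hbar ≠ 0) (p : ℕ) (hp : 1 ≤ p) (a : Fin p → ℂ) (r : Fin p → ℕ) :
    ∀ (k : Fin p) (t : ℕ), t < r k →
      ∃ s : Fin p → ℕ, (∀ k' : Fin p, s k' ≤ r k') ∧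
        (∏ k' : Fin p,
            ((X - C (a k' + hbar)) * (X - C (a k' - (r k' : ℂ) * hbar)))).rootMultiplicity
              (a k - (t : ℂ) * hbar) <
          (∏ k' : Fin p,
              ((X - C (a k' - ((s k' : ℂ) - 1) * hbar)) *
                (X - C (a k' - (s k' : ℂ) * hbar)))).rootMultiplicity
            (a k - (t : ℂ) * hbar) :=
  exists_tuple_pole_of_eigenvalue_general hbar hhbar p a r
end
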